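/- arXiv:1106.0720 — 4 statements merged into one kernel-verified Lean document; each statement's English description precedes it below -/
import Mathlib

section
/- Let {log f_n} be a Bowen sequence on a countable Markov shift Σ satisfying the lower almost-additivity inequality f_n(x) f_m(σ^n x) e^{-C} ≤ f_{n+m}(x). Then there exists a constant k ∈ ℝ such that for every symbol a and all n, m ∈ ℕ, Z_n(F,a) · Z_m(F,a) ≤ e^k · Z_{n+m}(F,a), where Z_n(F,a) = Σ_{σ^n x = x} f_n(x) χ_{C_a}(x). -/
open scoped ENNReal
open Filter

noncomputable section

/-- The one-sided shift map on sequences. -/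
def shf {S : Type*} : (ℕ → S) → (ℕ → S) := fun x i => x (i + 1)

/-- The countable Markov shift determined by the transition relation `T`. -/
def shiftSpace {S : Type*} (T : S → S → Prop) : Set (ℕ → S) :=
  {x | ∀ i, T (x i) (x (i + 1))}


/-- The partition function `Z_n(F,a)`: sum of `f_n` over periodic points of period `n`
starting with symbol `a`. -/
def ZFun {S : Type*} (T : S → S → Prop) (f : ℕ → (ℕ → S) → ℝ) (n : ℕ) (a : S) : ℝ≥0∞ :=
  ∑' x : {x : ℕ → S // x ∈ shiftSpace T ∧ shf^[n] x = x ∧ x 0 = a}, ENNReal.ofReal (f n x)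

lemma shf_iterate_apply {S : Type*} (k : ℕ) (x : ℕ → S) (i : ℕ) :
    shf^[k] x i = x (i + k) := by
  induction k generalizing x i with
  | zero => rfl
  | succ k ih =>
    rw [Function.iterate_succ_apply, ih]
    simp [shf, Nat.add_assoc, Nat.add_comm 1 k]

lemma periodic_mod {S : Type*} {n : ℕ} (hn : 0 < n) {x : ℕ → S}
    (hx : shf^[n] x = x) (i : ℕ) : x i = x (i % n) := by
  have hper : ∀ j, x (j + n) = x j := fun j => by
    conv_rhs => rw [← hx]; rw [shf_iterate_apply]
  have : ∀ q r, x (r + n * q) = x r := by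
    intro q
    induction q with
    | zero => simp
    | succ q ih => intro r; rw [Nat.mul_succ, ← Nat.add_assoc, hper, ih]
  conv_lhs => rw [← Nat.mod_add_div i n]
  exact this _ _

lemma shf_iterate_mem {S : Type*} {T : S → S → Prop} (k : ℕ) {x : ℕ → S}
    (hx : x ∈ shiftSpace T) : shf^[k] x ∈ shiftSpace T := by
  intro i
  rw [shf_iterate_apply, shf_iterate_apply]
  have := hx (i + k)
  simpa [Nat.add_right_comm] using this

/-- Lemma 3.1: approximate supermultiplicativity of the partition functions for a Bowen
sequence satisfying the lower almost-additivity inequality. -/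
theorem Z_supermultiplicative {S : Type*} [Countable S] (T : S → S → Prop)
    (f : ℕ → (ℕ → S) → ℝ) (M C : ℝ) (hM : 0 < M) (hC : 0 ≤ C)
    (hpos : ∀ n, 0 < n → ∀ x ∈ shiftSpace T, 0 < f n x)
    (hBowen : ∀ n, 0 < n → ∀ x ∈ shiftSpace T, ∀ y ∈ shiftSpace T,
      (∀ i < n, x i = y i) → f n x ≤ M * f n y)
    (hAA : ∀ n m, 0 < n → 0 < m → ∀ x ∈ shiftSpace T,
      f n x * f m (shf^[n] x) * Real.exp (-C) ≤ f (n + m) x) :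
    ∃ k : ℝ, ∀ a : S, ∀ n m, 0 < n → 0 < m →
      ZFun T f n a * ZFun T f m a ≤ ENNReal.ofReal (Real.exp k) * ZFun T f (n + m) a := by
  refine ⟨2 * Real.log M + C, fun a n m hn hm => ?_⟩
  set k := 2 * Real.log M + C with hk
  have hnm : 0 < n + m := Nat.add_pos_left hn m
  -- concatenation
  set g : (ℕ → S) → (ℕ → S) → ℕ → S := fun x y i =>
    if i % (n + m) < n then x (i % (n + m)) else y (i % (n + m) - n) with hg
  -- basic facts about g
  have hgx : ∀ (x y : ℕ → S), ∀ i < n, g x y i = x i := by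
    intro x y i hi
    have h1 : i % (n + m) = i := Nat.mod_eq_of_lt (Nat.lt_of_lt_of_le hi (Nat.le_add_right n m))
    simp [hg, h1, hi]
  have hgy : ∀ (x y : ℕ → S), ∀ i < m, g x y (i + n) = y i := by
    intro x y i hi
    have h1 : (i + n) % (n + m) = i + n := by
      apply Nat.mod_eq_of_lt; omega
    simp [hg, h1, Nat.not_lt.mpr (Nat.le_add_left n i)]
  have hgper : ∀ (x y : ℕ → S), shf^[n + m] (g x y) = g x y := by
    intro x y
    funext i
    rw [shf_iterate_apply]
    have : (i + (n + m)) % (n + m) = i % (n + m) := Nat.add_mod_right i (n+m)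
    simp [hg, this]
  have hgmem : ∀ (x y : ℕ → S), x ∈ shiftSpace T → y ∈ shiftSpace T →
      shf^[n] x = x → shf^[m] y = y → x 0 = a → y 0 = a →
      g x y ∈ shiftSpace T := by
    intro x y hx hy hxp hyp hx0 hy0 i
    have hxn : x n = a := by
      have h := congrFun hxp 0
      rw [shf_iterate_apply] at h
      simpa [hx0] using h
    have hym : y m = a := by
      have h := congrFun hyp 0
      rw [shf_iterate_apply] at h
      simpa [hy0] using h
    set r := i % (n + m) with hr
    have hrlt : r < n + m := Nat.mod_lt _ hnm
    have h1m : (1 : ℕ) % (n + m) = 1 := Nat.mod_eq_of_lt (by omega)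
    have h2' : (i + 1) % (n + m) = (r + 1) % (n + m) := by
      rw [Nat.add_mod, h1m, ← hr]
    by_cases hlast : r + 1 = n + m
    · -- wrap-around
      have h2 : (i + 1) % (n + m) = 0 := by rw [h2', hlast, Nat.mod_self]
      have hz1 : g x y i = y (m - 1) := by
        simp only [hg, ← hr, if_neg (show ¬ r < n by omega)]
        congr 1; omega
      have hz2 : g x y (i + 1) = y m := by
        simp only [hg, h2, if_pos hn]
        rw [hx0, ← hym]
      rw [hz1, hz2]
      have h := hy (m - 1)
      rwa [show m - 1 + 1 = m by omega] at h
    · have h2 : (i + 1) % (n + m) = r + 1 := by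
        rw [h2', Nat.mod_eq_of_lt (by omega)]
      rcases lt_trichotomy (r + 1) n with h | h | h
      · have hz1 : g x y i = x r := by
          simp only [hg, ← hr, if_pos (show r < n by omega)]
        have hz2 : g x y (i + 1) = x (r + 1) := by
          simp only [hg, h2, if_pos h]
        rw [hz1, hz2]; exact hx r
      · have hz1 : g x y i = x r := by
          simp only [hg, ← hr, if_pos (show r < n by omega)]
        have hz2 : g x y (i + 1) = x (r + 1) := by
          simp only [hg, h2, if_neg (show ¬ r + 1 < n by omega)]
          rw [show r + 1 - n = 0 by omega, hy0, h, ← hxn]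
        rw [hz1, hz2]; exact hx r
      · have hz1 : g x y i = y (r - n) := by
          simp only [hg, ← hr, if_neg (show ¬ r < n by omega)]
        have hz2 : g x y (i + 1) = y (r - n + 1) := by
          simp only [hg, h2, if_neg (show ¬ r + 1 < n by omega)]
          congr 1; omega
        rw [hz1, hz2]; exact hy (r - n)
  -- types of periodic points
  set P : ℕ → Type _ := fun j => {x : ℕ → S // x ∈ shiftSpace T ∧ shf^[j] x = x ∧ x 0 = a}
    with hP
  -- the concatenation map into periodic points of period n+m
  have hg0 : ∀ (x y : ℕ → S), x 0 = a → g x y 0 = a := by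
    intro x y hx0
    have : (0 : ℕ) % (n + m) = 0 := Nat.zero_mod _
    simp only [hg, this, if_pos hn, hx0]
  set Z : P n × P m → P (n + m) := fun p =>
    ⟨g p.1.1 p.2.1,
      hgmem _ _ p.1.2.1 p.2.2.1 p.1.2.2.1 p.2.2.2.1 p.1.2.2.2 p.2.2.2.2,
      hgper _ _, hg0 _ _ p.1.2.2.2⟩ with hZ
  -- injectivity
  have hinj : Function.Injective Z := by
    rintro ⟨⟨x1, hx1, hx1p, hx10⟩, ⟨y1, hy1, hy1p, hy10⟩⟩
      ⟨⟨x2, hx2, hx2p, hx20⟩, ⟨y2, hy2, hy2p, hy20⟩⟩ heq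
    have hgeq : g x1 y1 = g x2 y2 := congrArg Subtype.val heq
    have hx : x1 = x2 := by
      funext i
      rw [periodic_mod hn hx1p i, periodic_mod hn hx2p i]
      rw [← hgx x1 y1 _ (Nat.mod_lt _ hn), ← hgx x2 y2 _ (Nat.mod_lt _ hn), hgeq]
    have hy : y1 = y2 := by
      funext i
      rw [periodic_mod hm hy1p i, periodic_mod hm hy2p i]
      rw [← hgy x1 y1 _ (Nat.mod_lt _ hm), ← hgy x2 y2 _ (Nat.mod_lt _ hm), hgeq]
    subst hx; subst hy; rfl
  -- pointwise inequality
  have hpoint : ∀ p : P n × P m,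
      f n p.1.1 * f m p.2.1 ≤ Real.exp k * f (n + m) (Z p).1 := by
    rintro ⟨⟨x, hx, hxp, hx0⟩, ⟨y, hy, hyp, hy0⟩⟩
    set z : ℕ → S := g x y with hzdef
    have hz : z ∈ shiftSpace T := hgmem _ _ hx hy hxp hyp hx0 hy0
    have hzn : shf^[n] z ∈ shiftSpace T := shf_iterate_mem n hz
    have hfx : f n x ≤ M * f n z :=
      hBowen n hn x hx z hz (fun i hi => (hgx x y i hi).symm)
    have hfy : f m y ≤ M * f m (shf^[n] z) := by
      refine hBowen m hm y hy _ hzn (fun i hi => ?_)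
      rw [shf_iterate_apply]
      exact (hgy x y i hi).symm
    have haa : f n z * f m (shf^[n] z) * Real.exp (-C) ≤ f (n + m) z :=
      hAA n m hn hm z hz
    have hzpos : 0 < f n z := hpos n hn z hz
    have hznpos : 0 < f m (shf^[n] z) := hpos m hm _ hzn
    have hxpos : 0 < f n x := hpos n hn x hx
    have hypos : 0 < f m y := hpos m hm y hy
    have hexpk : Real.exp k = M * M * Real.exp C := by
      rw [hk, Real.exp_add, two_mul, Real.exp_add, Real.exp_log hM]
    calc f n x * f m y ≤ (M * f n z) * (M * f m (shf^[n] z)) := by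
          apply mul_le_mul hfx hfy (le_of_lt hypos)
          positivity
      _ = M * M * Real.exp C *
            (f n z * f m (shf^[n] z) * Real.exp (-C)) := by
          rw [Real.exp_neg]
          field_simp
      _ ≤ M * M * Real.exp C * f (n + m) z := by
          apply mul_le_mul_of_nonneg_left haa
          positivity
      _ = Real.exp k * f (n + m) z := by rw [hexpk]
  -- sum it up
  have hnn : ∀ p : P n × P m, 0 ≤ f n p.1.1 :=
    fun p => le_of_lt (hpos n hn _ p.1.2.1)
  calc ZFun T f n a * ZFun T f m a
      = ∑' p : P n × P m,
          ENNReal.ofReal (f n p.1.1) * ENNReal.ofReal (f m p.2.1) := by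
        rw [ZFun, ZFun]
        symm
        rw [ENNReal.tsum_prod (f := fun (x : P n) (y : P m) => ENNReal.ofReal (f n x.1) * ENNReal.ofReal (f m y.1))]
        simp_rw [ENNReal.tsum_mul_left]
        rw [ENNReal.tsum_mul_right]
    _ ≤ ∑' p : P n × P m,
          ENNReal.ofReal (Real.exp k) * ENNReal.ofReal (f (n + m) (Z p).1) := by
        refine ENNReal.tsum_le_tsum (fun p => ?_)
        rw [← ENNReal.ofReal_mul (hnn p), ← ENNReal.ofReal_mul (Real.exp_nonneg k)]
        exact ENNReal.ofReal_le_ofReal (hpoint p)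
    _ = ENNReal.ofReal (Real.exp k) *
          ∑' p : P n × P m, ENNReal.ofReal (f (n + m) (Z p).1) :=
        ENNReal.tsum_mul_left
    _ ≤ ENNReal.ofReal (Real.exp k) * ZFun T f (n + m) a := by
        gcongr
        exact ENNReal.tsum_comp_le_tsum_of_injective hinj
          (fun w => ENNReal.ofReal (f (n + m) w.1))
end
end

section
/- Let Σ be a topologically mixing countable Markov shift and {log f_n} an almost-additive Bowen sequence on Σ. Then P(F) = sup { P(F|_Y) : Y ⊆ Σ a topologically mixing finite-state Markov subshift }. -/
open scoped ENNReal
open Filter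

noncomputable section

/-- The almost-additive Gurevich pressure (as a `limsup`; under the standing hypotheses
the limit exists and coincides with it). -/
def press {S : Type*} (T : S → S → Prop) (f : ℕ → (ℕ → S) → ℝ) (a : S) : EReal :=
  Filter.atTop.limsup (fun n : ℕ => ENNReal.log (ZFun T f n a) / ((n : ℝ) : EReal))

/-- Topological mixing of a subshift, relative to its own set of occurring symbols. -/
def SubMixing {S : Type*} (T' : S → S → Prop) : Prop :=
  ∀ a b : S, (∃ x ∈ shiftSpace T', x 0 = a) → (∃ y ∈ shiftSpace T', y 0 = b) →
    ∃ N : ℕ, ∀ n > N, ∃ x ∈ shiftSpace T', x 0 = a ∧ x n = b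

namespace PressAux

variable {S : Type*}

lemma shf_iter (n : ℕ) (x : ℕ → S) (i : ℕ) : shf^[n] x i = x (i + n) := by
  induction n generalizing x i with
  | zero => rfl
  | succ n ih =>
    rw [Function.iterate_succ_apply]
    rw [ih]
    simp [shf]; ring_nf

lemma mem_shift {R : S → S → Prop} {x : ℕ → S} (hx : x ∈ shiftSpace R) (m : ℕ) :
    shf^[m] x ∈ shiftSpace R := by
  intro i
  rw [shf_iter, shf_iter]
  have := hx (i + m)
  simpa [Nat.add_right_comm] using this

lemma SS_mono {R R' : S → S → Prop} (h : ∀ c d, R' c d → R c d) :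
    shiftSpace R' ⊆ shiftSpace R := fun x hx i => h _ _ (hx i)

lemma periodic_add {p : ℕ} {x : ℕ → S} (hp : shf^[p] x = x) (i : ℕ) : x (i + p) = x i := by
  conv_rhs => rw [← hp]
  rw [shf_iter]

lemma periodic_mod {p : ℕ} {x : ℕ → S} (hp : shf^[p] x = x) (hp0 : 0 < p) (i : ℕ) :
    x i = x (i % p) := by
  have key : ∀ m j, x (j + m * p) = x j := by
    intro m
    induction m with
    | zero => simp
    | succ m ih => intro j; rw [Nat.succ_mul, ← Nat.add_assoc, periodic_add hp, ih]
  conv_lhs => rw [← Nat.mod_add_div' i p]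
  exact key (i / p) (i % p)

/-- Splice: first `p` entries of `z`, then `y`. -/
def splice (p : ℕ) (z y : ℕ → S) : ℕ → S := fun i => if i < p then z i else y (i - p)

lemma splice_lt {p : ℕ} {z y : ℕ → S} {i : ℕ} (h : i < p) : splice p z y i = z i := if_pos h

lemma splice_add (p : ℕ) (z y : ℕ → S) (j : ℕ) : splice p z y (p + j) = y j := by
  simp [splice]

lemma splice_mem {R : S → S → Prop} {p : ℕ} {z y : ℕ → S} (hz : z ∈ shiftSpace R)
    (hy : y ∈ shiftSpace R) (hpz : z p = y 0) : splice p z y ∈ shiftSpace R := by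
  intro i
  rcases lt_trichotomy (i + 1) p with h | h | h
  · rw [splice_lt (by omega), splice_lt h]; exact hz i
  · subst h
    rw [splice_lt (by omega)]
    have h2 : splice (i + 1) z y (i + 1) = y 0 := by simp [splice]
    rw [h2, ← hpz]
    exact hz i
  · have hip : ¬ i < p := by omega
    have h1 : ¬ i + 1 < p := by omega
    simp only [splice, if_neg hip, if_neg h1]
    have : i + 1 - p = (i - p) + 1 := by omega
    rw [this]
    exact hy (i - p)

/-- Periodic extension of the first `p` entries of `s`. -/
def per (p : ℕ) (s : ℕ → S) : ℕ → S := fun i => s (i % p)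

lemma per_eq_of_lt {p : ℕ} {s : ℕ → S} {i : ℕ} (h : i < p) : per p s i = s i := by
  simp [per, Nat.mod_eq_of_lt h]

lemma per_periodic {p : ℕ} (s : ℕ → S) : shf^[p] (per p s) = per p s := by
  funext i
  rw [shf_iter]
  simp [per, Nat.add_mod_right]

lemma mod_succ_cases (i p : ℕ) (hp : 0 < p) :
    (i % p + 1 = p ∧ (i + 1) % p = 0) ∨ (i % p + 1 < p ∧ (i + 1) % p = i % p + 1) := by
  have hr : i % p < p := Nat.mod_lt _ hp
  have hdm := Nat.div_add_mod i p
  rcases eq_or_lt_of_le (Nat.succ_le_of_lt hr) with h | h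
  · left
    refine ⟨h, ?_⟩
    have h2 : i + 1 = p * (i / p + 1) := by
      have h3 : p * (i / p + 1) = p * (i / p) + p := by ring
      omega
    rw [h2, Nat.mul_mod_right]
  · right
    refine ⟨h, ?_⟩
    have h2 : i + 1 = p * (i / p) + (i % p + 1) := by omega
    rw [h2, Nat.mul_add_mod, Nat.mod_eq_of_lt h]

lemma per_mem {R : S → S → Prop} {p : ℕ} {s : ℕ → S} (hs : s ∈ shiftSpace R)
    (hsp : s p = s 0) (hp : 0 < p) : per p s ∈ shiftSpace R := by
  intro i
  rcases mod_succ_cases i p hp with ⟨h, h0⟩ | ⟨h, h0⟩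
  · show R (s (i % p)) (s ((i + 1) % p))
    have h4 := hs (i % p)
    rw [h, hsp] at h4
    rw [h0]
    exact h4
  · show R (s (i % p)) (s ((i + 1) % p))
    rw [h0]
    exact hs (i % p)

/-- Repeated splicing of a block `Q` of length `p`, `α` times, in front of `tail`. -/
def repb : ℕ → ℕ → (ℕ → S) → (ℕ → S) → (ℕ → S)
  | 0, _, _, tail => tail
  | (α + 1), p, Q, tail => splice p Q (repb α p Q tail)

lemma repb_mem {R : S → S → Prop} {p : ℕ} {Q tail : ℕ → S} {a : S}
    (hQ : Q ∈ shiftSpace R) (hQ0 : Q 0 = a) (hQp : Q p = a) (hp : 0 < p)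
    (htail : tail ∈ shiftSpace R) (ht0 : tail 0 = a) (α : ℕ) :
    repb α p Q tail ∈ shiftSpace R ∧ repb α p Q tail 0 = a := by
  induction α with
  | zero => exact ⟨htail, ht0⟩
  | succ α ih =>
    refine ⟨splice_mem hQ ih.1 (by rw [hQp, ih.2]), ?_⟩
    show splice p Q (repb α p Q tail) 0 = a
    rw [splice_lt hp, hQ0]

lemma repb_add (α p : ℕ) (Q tail : ℕ → S) (j : ℕ) :
    repb α p Q tail (α * p + j) = tail j := by
  induction α with
  | zero => simp [repb]
  | succ α ih =>
    show splice p Q (repb α p Q tail) ((α + 1) * p + j) = tail j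
    have h : (α + 1) * p + j = p + (α * p + j) := by ring
    rw [h, splice_add, ih]

/-! ### EReal and limsup helpers -/

lemma ereal_le_of_forall_lt {x y : EReal} (h : ∀ r : ℝ, (r : EReal) < x → (r : EReal) ≤ y) :
    x ≤ y := by
  by_contra hc
  push_neg at hc
  rcases EReal.exists_between_coe_real hc with ⟨r, hyr, hrx⟩
  exact absurd (h r hrx) (not_le.mpr hyr)

lemma log_ge_of_ofReal_le {r : ℝ} {B : ℝ≥0∞} (hr : 0 < r) (h : ENNReal.ofReal r ≤ B) :
    (Real.log r : EReal) ≤ ENNReal.log B := by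
  have := ENNReal.log_monotone h
  rwa [ENNReal.log_ofReal_of_pos hr] at this

lemma ofReal_le_of_log_ge {r : ℝ} {B : ℝ≥0∞} (hr : 0 < r)
    (h : (Real.log r : EReal) ≤ ENNReal.log B) : ENNReal.ofReal r ≤ B := by
  rw [← ENNReal.log_le_log_iff, ENNReal.log_ofReal_of_pos hr]
  exact h

lemma coe_nat_pos {m : ℕ} (hm : 1 ≤ m) : (0 : EReal) < ((m : ℝ) : EReal) := by
  have : (0 : ℝ) < (m : ℝ) := by exact_mod_cast hm
  exact_mod_cast this

lemma le_div_nat {x : EReal} {r : ℝ} {m : ℕ} (hm : 1 ≤ m)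
    (h : ((r * m : ℝ) : EReal) ≤ x) : (r : EReal) ≤ x / ((m : ℝ) : EReal) := by
  rw [EReal.le_div_iff_mul_le (coe_nat_pos hm) (EReal.coe_ne_top _)]
  rw [← EReal.coe_mul]
  exact h

lemma of_le_div_nat {x : EReal} {r : ℝ} {m : ℕ} (hm : 1 ≤ m)
    (h : (r : EReal) ≤ x / ((m : ℝ) : EReal)) : ((r * m : ℝ) : EReal) ≤ x := by
  rw [EReal.le_div_iff_mul_le (coe_nat_pos hm) (EReal.coe_ne_top _)] at h
  rwa [← EReal.coe_mul] at h

/-- Transfer lemma for limsup pressures. -/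
lemma limsup_transfer {A B : ℕ → ℝ≥0∞} {D : ℝ} (hD : 0 < D) (K : ℕ)
    (h : ∀ n, 1 ≤ n → ENNReal.ofReal D * B n ≤ A (n + K)) :
    Filter.atTop.limsup (fun n : ℕ => ENNReal.log (B n) / ((n : ℝ) : EReal)) ≤
      Filter.atTop.limsup (fun n : ℕ => ENNReal.log (A n) / ((n : ℝ) : EReal)) := by
  apply ereal_le_of_forall_lt
  intro t ht
  rcases EReal.exists_between_coe_real ht with ⟨s, hts, hs⟩
  have htsr : t < s := by exact_mod_cast hts
  have hfreq := Filter.frequently_lt_of_lt_limsup (h := hs)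
  obtain ⟨n0, hn0⟩ : ∃ n0 : ℕ, ∀ n : ℕ, n0 ≤ n → t * ((n : ℝ) + K) ≤ Real.log D + s * n := by
    obtain ⟨n0, hn0⟩ := exists_nat_ge ((t * K - Real.log D) / (s - t))
    refine ⟨n0, fun n hn => ?_⟩
    have h1 : (t * K - Real.log D) / (s - t) ≤ (n : ℝ) :=
      hn0.trans (by exact_mod_cast hn)
    have h2 := (div_le_iff₀ (by linarith)).mp h1
    nlinarith
  apply Filter.le_limsup_of_frequently_le'
  rw [Filter.frequently_atTop] at hfreq ⊢
  intro N
  obtain ⟨n, hn, hlt⟩ := hfreq (max (max N 1) n0)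
  have hn1 : 1 ≤ n := le_trans (le_max_right N 1) (le_trans (le_max_left _ n0) hn)
  have hnn0 : n0 ≤ n := le_trans (le_max_right _ n0) hn
  have hnN : N ≤ n + K := le_trans (le_trans (le_max_left N 1) (le_trans (le_max_left _ n0) hn)) (Nat.le_add_right n K)
  refine ⟨n + K, hnN, ?_⟩
  have h1 : ((s * n : ℝ) : EReal) ≤ ENNReal.log (B n) := of_le_div_nat hn1 hlt.le
  have h2 : ENNReal.ofReal (Real.exp (s * n)) ≤ B n := by
    apply ofReal_le_of_log_ge (Real.exp_pos _)
    rwa [Real.log_exp]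
  have h3 : ENNReal.ofReal (D * Real.exp (s * n)) ≤ A (n + K) := by
    rw [ENNReal.ofReal_mul hD.le]
    exact le_trans (mul_le_mul_right h2 _) (h n hn1)
  have h4 : ((Real.log D + s * n : ℝ) : EReal) ≤ ENNReal.log (A (n + K)) := by
    have := log_ge_of_ofReal_le (by positivity) h3
    rwa [Real.log_mul hD.ne' (Real.exp_pos _).ne', Real.log_exp] at this
  apply le_div_nat (by omega)
  refine le_trans ?_ h4
  apply EReal.coe_le_coe_iff.mpr
  have := hn0 n hnn0
  push_cast
  linarith

/-- Geometric lower bound lemma for the limsup pressure. -/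
lemma limsup_geo {A : ℕ → ℝ≥0∞} {d : ℝ} (hd : 0 < d) {n : ℕ} (hn : 1 ≤ n)
    (h : ∀ k, 1 ≤ k → ENNReal.ofReal (d ^ k) ≤ A (k * n)) :
    ((Real.log d / n : ℝ) : EReal) ≤
      Filter.atTop.limsup (fun m : ℕ => ENNReal.log (A m) / ((m : ℝ) : EReal)) := by
  apply Filter.le_limsup_of_frequently_le'
  rw [Filter.frequently_atTop]
  intro N
  set k := max N 1 with hk
  have hk1 : 1 ≤ k := le_max_right N 1
  have hkN : N ≤ k * n := le_trans (le_max_left N 1) (Nat.le_mul_of_pos_right _ (by omega))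
  refine ⟨k * n, hkN, ?_⟩
  have h4 : (((k : ℝ) * Real.log d : ℝ) : EReal) ≤ ENNReal.log (A (k * n)) := by
    have := log_ge_of_ofReal_le (by positivity) (h k hk1)
    rwa [Real.log_pow] at this
  apply le_div_nat (Nat.one_le_iff_ne_zero.mpr (Nat.mul_ne_zero (by omega) (by omega)))
  refine le_trans (EReal.coe_le_coe_iff.mpr ?_) h4
  apply le_of_eq
  have hne : (n : ℝ) ≠ 0 := by positivity
  push_cast
  field_simp

lemma tsum_le_ZFun {S : Type*} (T : S → S → Prop) (f : ℕ → (ℕ → S) → ℝ) {n : ℕ} {a : S}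
    {ι : Type*} (g : ι → ℕ → S)
    (hg : ∀ i, g i ∈ shiftSpace T ∧ shf^[n] (g i) = g i ∧ (g i) 0 = a)
    (hinj : Function.Injective g) (v : ι → ℝ) (hv : ∀ i, v i ≤ f n (g i)) :
    ∑' i, ENNReal.ofReal (v i) ≤ ZFun T f n a := by
  have step1 : ∑' i, ENNReal.ofReal (v i) ≤ ∑' i, ENNReal.ofReal (f n (g i)) :=
    ENNReal.tsum_le_tsum (fun i => ENNReal.ofReal_le_ofReal (hv i))
  refine le_trans step1 ?_
  have step2 := ENNReal.tsum_comp_le_tsum_of_injective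
    (f := fun i => (⟨g i, hg i⟩ : {x : ℕ → S // x ∈ shiftSpace T ∧ shf^[n] x = x ∧ x 0 = a}))
    (fun i j hij => hinj (congrArg Subtype.val hij))
    (fun x => ENNReal.ofReal (f n x.1))
  exact step2

lemma ZFun_mono {S : Type*} {T T' : S → S → Prop} (h : ∀ c d, T' c d → T c d)
    (f : ℕ → (ℕ → S) → ℝ) (n : ℕ) (b : S) : ZFun T' f n b ≤ ZFun T f n b := by
  apply tsum_le_ZFun T f (fun x : {x : ℕ → S // x ∈ shiftSpace T' ∧ shf^[n] x = x ∧ x 0 = b} => x.1)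
    (fun x => ⟨SS_mono h x.2.1, x.2.2.1, x.2.2.2⟩)
    (fun x y hxy => Subtype.ext hxy)
    (fun x => f n x.1) (fun x => le_rfl)

lemma press_mono {S : Type*} {T T' : S → S → Prop} (h : ∀ c d, T' c d → T c d)
    (f : ℕ → (ℕ → S) → ℝ) (b : S) : press T' f b ≤ press T f b := by
  apply Filter.limsup_le_limsup
  apply Filter.Eventually.of_forall
  intro n
  exact EReal.div_le_div_right_of_nonneg (by exact_mod_cast Nat.cast_nonneg' n)
    (ENNReal.log_monotone (ZFun_mono h f n b))
  exact Filter.isCobounded_le_of_bot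
  exact Filter.isBounded_le_of_top

section Glue

variable {S : Type*} {T : S → S → Prop} {f : ℕ → (ℕ → S) → ℝ} {M C : ℝ}

/-- The pressure does not depend on the base symbol. -/
lemma press_symbol_le
    (hmix : ∀ a b : S, ∃ N : ℕ, ∀ n > N, ∃ x ∈ shiftSpace T, x 0 = a ∧ x n = b)
    (hM : 0 < M) (hC : 0 ≤ C)
    (hpos : ∀ n, 0 < n → ∀ x ∈ shiftSpace T, 0 < f n x)
    (hBowen : ∀ n, 0 < n → ∀ x ∈ shiftSpace T, ∀ y ∈ shiftSpace T,
      (∀ i < n, x i = y i) → f n x ≤ M * f n y)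
    (hAA : ∀ n m, 0 < n → 0 < m → ∀ x ∈ shiftSpace T,
      f n x * f m (shf^[n] x) * Real.exp (-C) ≤ f (n + m) x ∧
        f (n + m) x ≤ Real.exp C * (f n x * f m (shf^[n] x)))
    (a b : S) : press T f b ≤ press T f a := by
  obtain ⟨N1, hN1⟩ := hmix a b
  obtain ⟨N2, hN2⟩ := hmix b a
  obtain ⟨u, hu, hu0, huk⟩ := hN1 (N1 + 1) (by omega)
  obtain ⟨w, hw, hw0, hwl⟩ := hN2 (N2 + 1) (by omega)
  set k := N1 + 1 with hkdef
  set l := N2 + 1 with hldef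
  have hk1 : 0 < k := by omega
  have hl1 : 0 < l := by omega
  have hfu : 0 < f k u := hpos k hk1 u hu
  have hfw : 0 < f l w := hpos l hl1 w hw
  set D := Real.exp (-(2 * C)) * f k u * f l w / (M * M * M) with hDdef
  have hD : 0 < D := by positivity
  unfold press
  apply limsup_transfer hD (k + l)
  intro n hn
  have hn0 : 0 < n := hn
  set P := n + (k + l) with hPdef
  -- the index type of Z_n(b)
  set ι := {x : ℕ → S // x ∈ shiftSpace T ∧ shf^[n] x = x ∧ x 0 = b} with hιdef
  -- the glued point
  set g : ι → ℕ → S := fun x => per P (splice k u (splice n x.1 w)) with hgdef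
  have hsmem : ∀ x : ι, splice k u (splice n x.1 w) ∈ shiftSpace T := by
    intro x
    apply splice_mem hu (splice_mem x.2.1 hw ?_) ?_
    · rw [show x.1 n = x.1 (0 + n) by norm_num, periodic_add x.2.2.1, x.2.2.2, hw0]
    · rw [huk, splice_lt hn0, x.2.2.2]
  have hstop : ∀ x : ι, splice k u (splice n x.1 w) P = splice k u (splice n x.1 w) 0 := by
    intro x
    rw [splice_lt hk1, hu0]
    rw [show P = k + (n + l) by omega, splice_add, splice_add, hwl]
  have hP0 : 0 < P := by omega
  have hgmem : ∀ x : ι, g x ∈ shiftSpace T := fun x => per_mem (hsmem x) (hstop x) hP0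
  have hgper : ∀ x : ι, shf^[P] (g x) = g x := fun x => per_periodic _
  -- coordinate evaluations
  have hgu : ∀ (x : ι) (i : ℕ), i < k → g x i = u i := by
    intro x i hi
    rw [hgdef]
    simp only
    rw [per_eq_of_lt (by omega), splice_lt hi]
  have hgx : ∀ (x : ι) (i : ℕ), i < n → g x (k + i) = x.1 i := by
    intro x i hi
    rw [hgdef]
    simp only
    rw [per_eq_of_lt (by omega), splice_add, splice_lt hi]
  have hgw : ∀ (x : ι) (i : ℕ), i < l → g x (k + (n + i)) = w i := by
    intro x i hi
    rw [hgdef]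
    simp only
    rw [per_eq_of_lt (by omega), splice_add, splice_add]
  have hg0 : ∀ x : ι, g x 0 = a := by
    intro x
    rw [hgu x 0 hk1, hu0]
  -- injectivity
  have hinj : Function.Injective g := by
    intro x y hxy
    apply Subtype.ext
    funext i
    have hxi := periodic_mod x.2.2.1 hn0 i
    have hyi := periodic_mod y.2.2.1 hn0 i
    have hmod : i % n < n := Nat.mod_lt _ hn0
    rw [hxi, hyi, ← hgx x _ hmod, ← hgx y _ hmod, hxy]
  -- the value estimate
  have hval : ∀ x : ι, D * f n x.1 ≤ f (n + (k + l)) (g x) := by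
    intro x
    set z := g x with hzdef
    have hz : z ∈ shiftSpace T := hgmem x
    have hzk : shf^[k] z ∈ shiftSpace T := mem_shift hz k
    have hznk : shf^[n] (shf^[k] z) ∈ shiftSpace T := mem_shift hzk n
    have h5 := (hAA k (n + l) hk1 (by omega) z hz).1
    have h6 := (hAA n l hn0 hl1 (shf^[k] z) hzk).1
    set A1 := f k z with hA1
    set A2 := f n (shf^[k] z) with hA2
    set A3 := f l (shf^[n] (shf^[k] z)) with hA3
    have hA1p : 0 < A1 := hpos k hk1 z hz
    have hA2p : 0 < A2 := hpos n hn0 _ hzk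
    have hA3p : 0 < A3 := hpos l hl1 _ hznk
    have hfx : 0 < f n x.1 := hpos n hn0 x.1 x.2.1
    have b1 : f k u ≤ M * A1 := hBowen k hk1 u hu z hz (fun i hi => (hgu x i hi).symm)
    have b2 : f n x.1 ≤ M * A2 := by
      apply hBowen n hn0 x.1 x.2.1 _ hzk
      intro i hi
      rw [shf_iter, ← hgx x i hi]
      congr 1
      omega
    have b3 : f l w ≤ M * A3 := by
      apply hBowen l hl1 w hw _ hznk
      intro i hi
      rw [shf_iter, shf_iter, ← hgw x i hi]
      congr 1
      omega
    have hPeq : k + (n + l) = n + (k + l) := by omega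
    rw [hPeq] at h5
    have e2 : Real.exp (-(2 * C)) = Real.exp (-C) * Real.exp (-C) := by
      rw [← Real.exp_add]; ring_nf
    have key : f k u * f l w * f n x.1 ≤ (M * A1) * (M * A3) * (M * A2) := by
      apply mul_le_mul (mul_le_mul b1 b3 hfw.le (by positivity)) b2 hfx.le (by positivity)
    have step : D * f n x.1 ≤ Real.exp (-C) * Real.exp (-C) * (A1 * A2 * A3) := by
      rw [hDdef, e2]
      rw [div_mul_eq_mul_div, div_le_iff₀ (by positivity)]
      calc Real.exp (-C) * Real.exp (-C) * f k u * f l w * f n x.1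
          = Real.exp (-C) * Real.exp (-C) * (f k u * f l w * f n x.1) := by ring
        _ ≤ Real.exp (-C) * Real.exp (-C) * ((M * A1) * (M * A3) * (M * A2)) := by
            apply mul_le_mul_of_nonneg_left key (by positivity)
        _ = Real.exp (-C) * Real.exp (-C) * (A1 * A2 * A3) * (M * M * M) := by ring
    refine le_trans step ?_
    calc Real.exp (-C) * Real.exp (-C) * (A1 * A2 * A3)
        = A1 * (A2 * A3 * Real.exp (-C)) * Real.exp (-C) := by ring
      _ ≤ A1 * f (n + l) (shf^[k] z) * Real.exp (-C) := by
          apply mul_le_mul_of_nonneg_right _ (Real.exp_pos _).le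
          exact mul_le_mul_of_nonneg_left h6 hA1p.le
      _ ≤ f (n + (k + l)) z := h5
  -- put it together
  have hrw : ENNReal.ofReal D * ZFun T f n b = ∑' x : ι, ENNReal.ofReal (D * f n x.1) := by
    rw [ZFun, ← ENNReal.tsum_mul_left]
    congr 1
    funext x
    rw [ENNReal.ofReal_mul hD.le]
  rw [hrw]
  exact tsum_le_ZFun T f g (fun x => ⟨hgmem x, hgper x, hg0 x⟩) hinj _ hval

end Glue

lemma rep_qq {q m : ℕ} (hq : 1 ≤ q) (hm : q * q ≤ m) :
    ∃ α β : ℕ, m = α * q + β * (q + 1) := by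
  have hq0 : 0 < q := hq
  have hdm := Nat.div_add_mod m q
  have hb : m % q < q := Nat.mod_lt _ hq0
  have hdiv : q ≤ m / q := (Nat.le_div_iff_mul_le hq0).mpr hm
  have h2 : m % q ≤ m / q := le_trans hb.le hdiv
  refine ⟨m / q - m % q, m % q, ?_⟩
  zify at hdm
  zify [h2]
  linear_combination -hdm

section Sub

variable {S : Type*} {T : S → S → Prop} {f : ℕ → (ℕ → S) → ℝ} {M C : ℝ}

lemma exists_subsystem
    (hmix : ∀ a b : S, ∃ N : ℕ, ∀ n > N, ∃ x ∈ shiftSpace T, x 0 = a ∧ x n = b)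
    (hM : 0 < M) (hC : 0 ≤ C)
    (hpos : ∀ n, 0 < n → ∀ x ∈ shiftSpace T, 0 < f n x)
    (hBowen : ∀ n, 0 < n → ∀ x ∈ shiftSpace T, ∀ y ∈ shiftSpace T,
      (∀ i < n, x i = y i) → f n x ≤ M * f n y)
    (hAA : ∀ n m, 0 < n → 0 < m → ∀ x ∈ shiftSpace T,
      f n x * f m (shf^[n] x) * Real.exp (-C) ≤ f (n + m) x ∧
        f (n + m) x ≤ Real.exp C * (f n x * f m (shf^[n] x)))
    (a : S) (t : ℝ) (ht : (t : EReal) < press T f a) :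
    ∃ T' : S → S → Prop, ((∀ c d, T' c d → T c d) ∧
        {c | (∃ d, T' c d) ∨ (∃ d, T' d c)}.Finite ∧ SubMixing T' ∧
        (shiftSpace T').Nonempty) ∧ (t : EReal) ≤ press T' f a := by
  classical
  obtain ⟨t', htt', ht'⟩ := EReal.exists_between_coe_real ht
  have httr : t < t' := by exact_mod_cast htt'
  -- the two base loops at `a`
  obtain ⟨Na, hNa⟩ := hmix a a
  set q := Na + 1 with hqdef
  have hq1 : 1 ≤ q := by omega
  obtain ⟨xq, hxq, hxq0, hxqq⟩ := hNa q (by omega)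
  obtain ⟨xq1, hxq1, hxq10, hxq1q⟩ := hNa (q + 1) (by omega)
  set Qa : ℕ → S := per q xq with hQadef
  set Qb : ℕ → S := per (q + 1) xq1 with hQbdef
  have hQa0 : Qa 0 = a := by rw [hQadef, per_eq_of_lt (by omega), hxq0]
  have hQb0 : Qb 0 = a := by rw [hQbdef, per_eq_of_lt (by omega), hxq10]
  have hQamem : Qa ∈ shiftSpace T := per_mem hxq (by rw [hxqq, hxq0]) (by omega)
  have hQbmem : Qb ∈ shiftSpace T := per_mem hxq1 (by rw [hxq1q, hxq10]) (by omega)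
  have hQaper : shf^[q] Qa = Qa := per_periodic _
  have hQbper : shf^[q + 1] Qb = Qb := per_periodic _
  have hQaq : Qa q = a := by rw [show q = 0 + q by omega, periodic_add hQaper, hQa0]
  have hQbq : Qb (q + 1) = a := by
    rw [show q + 1 = 0 + (q + 1) by omega, periodic_add hQbper, hQb0]
  -- M ≥ 1
  have hM1 : 1 ≤ M := by
    have h1 := hBowen 1 (by omega) Qa hQamem Qa hQamem (fun i _ => rfl)
    have h2 := hpos 1 (by omega) Qa hQamem
    nlinarith
  set Dv := Real.exp (-C) / (M * M) with hDvdef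
  have hDv : 0 < Dv := by positivity
  have hDv1 : Dv ≤ 1 := by
    rw [hDvdef, div_le_one (by positivity)]
    have := Real.exp_le_one_iff.mpr (by linarith : -C ≤ 0)
    nlinarith
  -- threshold
  obtain ⟨n0, hn0⟩ : ∃ n0 : ℕ, ∀ n : ℕ, n0 ≤ n →
      C + 2 * Real.log M + Real.log 2 ≤ (t' - t) * n := by
    obtain ⟨n0, hn0⟩ := exists_nat_ge ((C + 2 * Real.log M + Real.log 2) / (t' - t))
    refine ⟨n0, fun n hn => ?_⟩
    have h1 : (C + 2 * Real.log M + Real.log 2) / (t' - t) ≤ (n : ℝ) :=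
      hn0.trans (by exact_mod_cast hn)
    have h2 := (div_le_iff₀ (by linarith)).mp h1
    linarith
  -- frequently, get a good n
  have hfreq := Filter.frequently_lt_of_lt_limsup (h := ht')
  rw [Filter.frequently_atTop] at hfreq
  obtain ⟨n, hn, hlt⟩ := hfreq (max n0 1)
  have hn1 : 1 ≤ n := le_trans (le_max_right n0 1) hn
  have hnn0 : n0 ≤ n := le_trans (le_max_left n0 1) hn
  have hn0' : 0 < n := hn1
  -- extract a finite subset of periodic points
  set ι := {x : ℕ → S // x ∈ shiftSpace T ∧ shf^[n] x = x ∧ x 0 = a} with hιdef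
  have hZlow : ENNReal.ofReal (Real.exp (t' * n)) ≤ ZFun T f n a := by
    apply ofReal_le_of_log_ge (Real.exp_pos _)
    rw [Real.log_exp]
    exact of_le_div_nat hn1 hlt.le
  have hZlow2 : ENNReal.ofReal (Real.exp (t' * n) / 2) < ZFun T f n a :=
    lt_of_lt_of_le (ENNReal.ofReal_lt_ofReal_iff (Real.exp_pos _) |>.mpr
      (by linarith [Real.exp_pos (t' * n)])) hZlow
  obtain ⟨F, hF⟩ : ∃ F : Finset ι,
      ENNReal.ofReal (Real.exp (t' * n) / 2) < ∑ x ∈ F, ENNReal.ofReal (f n x.1) := by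
    rw [ZFun, ENNReal.tsum_eq_iSup_sum] at hZlow2
    exact lt_iSup_iff.mp hZlow2
  set V := ∑ x ∈ F, f n x.1 with hVdef
  have hVsum : ENNReal.ofReal V = ∑ x ∈ F, ENNReal.ofReal (f n x.1) :=
    ENNReal.ofReal_sum_of_nonneg (fun x _ => (hpos n hn0' x.1 x.2.1).le)
  have hVlow : Real.exp (t' * n) / 2 < V := by
    rw [← hVsum] at hF
    have hVpos : 0 < ENNReal.ofReal V := lt_of_le_of_lt zero_le hF
    exact (ENNReal.ofReal_lt_ofReal_iff (ENNReal.ofReal_pos.mp hVpos)).mp hF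
  have hVpos : 0 < V := lt_trans (by positivity) hVlow
  -- the finite collection of loops and the subsystem
  set W : Set (ℕ → S) := ((fun x : ι => x.1) '' ↑F) ∪ {Qa, Qb} with hWdef
  have hWfin : W.Finite := ((F.finite_toSet.image _).union ((Set.finite_singleton Qb).insert Qa))
  set T' : S → S → Prop := fun c d => ∃ w ∈ W, ∃ i, w i = c ∧ w (i + 1) = d with hT'def
  have hQaW : Qa ∈ W := Set.mem_union_right _ (Set.mem_insert _ _)
  have hQbW : Qb ∈ W := Set.mem_union_right _ (by simp)
  have hFW : ∀ x : ι, x ∈ F → x.1 ∈ W := fun x hx =>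
    Set.mem_union_left _ ⟨x, hx, rfl⟩
  have hWdata : ∀ w ∈ W, w ∈ shiftSpace T ∧ w 0 = a ∧ ∃ p, 0 < p ∧ shf^[p] w = w := by
    intro w hw
    rcases hw with ⟨x, _, rfl⟩ | hw
    · exact ⟨x.2.1, x.2.2.2, n, hn0', x.2.2.1⟩
    · rcases hw with rfl | rfl
      · exact ⟨hQamem, hQa0, q, by omega, hQaper⟩
      · exact ⟨hQbmem, hQb0, q + 1, by omega, hQbper⟩
  have hsub : ∀ c d, T' c d → T c d := by
    rintro c d ⟨w, hw, i, rfl, rfl⟩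
    exact (hWdata w hw).1 i
  have hWss : ∀ w ∈ W, w ∈ shiftSpace T' := fun w hw i => ⟨w, hw, i, rfl, rfl⟩
  -- finite symbol set
  have hranges : ∀ w ∈ W, (Set.range w).Finite := by
    intro w hw
    obtain ⟨-, -, p, hp, hper⟩ := hWdata w hw
    apply Set.Finite.subset ((Set.finite_Iio p).image w)
    rintro c ⟨j, rfl⟩
    exact ⟨j % p, Nat.mod_lt _ hp, (periodic_mod hper hp j).symm⟩
  have hsymb : {c | (∃ d, T' c d) ∨ (∃ d, T' d c)}.Finite := by
    apply Set.Finite.subset (Set.Finite.biUnion hWfin hranges)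
    rintro c (⟨d, w, hw, i, rfl, -⟩ | ⟨d, w, hw, i, -, rfl⟩)
    · exact Set.mem_biUnion hw ⟨i, rfl⟩
    · exact Set.mem_biUnion hw ⟨i + 1, rfl⟩
  -- nonempty
  have hne : (shiftSpace T').Nonempty := ⟨Qa, hWss Qa hQaW⟩
  -- mixing
  have hmix' : SubMixing T' := by
    rintro c d ⟨x, hx, rfl⟩ ⟨y, hy, rfl⟩
    obtain ⟨w, hwW, i, hwi, -⟩ := hx 0
    obtain ⟨w', hw'W, i', hw'i, -⟩ := hy 0
    obtain ⟨-, hw0, p, hp, hper⟩ := hWdata w hwW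
    obtain ⟨-, hw'0, p', hp', hper'⟩ := hWdata w' hw'W
    set r := i % p with hrdef
    have hr : r < p := Nat.mod_lt _ hp
    set r' := i' % p' with hr'def
    have hr' : r' < p' := Nat.mod_lt _ hp'
    refine ⟨p + p' + (q + 1) * (q + 1), fun m hm => ?_⟩
    have hqq : q * q ≤ (q + 1) * (q + 1) := by nlinarith
    have hmm : q * q + ((p - r) + r') < m := by
      have : (p - r) + r' < p + p' := by omega
      omega
    obtain ⟨α, β, hαβ⟩ := rep_qq hq1 (by omega : q * q ≤ m - (p - r) - r')
    -- the tails
    have htail1 := repb_mem (R := T') (hWss Qb hQbW) hQb0 hQbq (by omega)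
      (hWss w' hw'W) hw'0 β
    have htail := repb_mem (R := T') (hWss Qa hQaW) hQa0 hQaq (by omega)
      htail1.1 htail1.2 α
    set X := splice (p - r) (shf^[r] w) (repb α q Qa (repb β (q + 1) Qb w')) with hXdef
    have hXmem : X ∈ shiftSpace T' := by
      apply splice_mem (mem_shift (hWss w hwW) r) htail.1
      rw [shf_iter, show p - r + r = p by omega, htail.2,
        show p = 0 + p by omega, periodic_add hper, hw0]
    refine ⟨X, hXmem, ?_, ?_⟩
    · rw [hXdef, splice_lt (by omega), shf_iter, Nat.zero_add, hrdef,
        ← periodic_mod hper hp, hwi]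
    · have hmsplit : m = (p - r) + (α * q + (β * (q + 1) + r')) := by omega
      rw [hXdef, hmsplit, splice_add, repb_add, repb_add, hr'def,
        ← periodic_mod hper' hp', hw'i]
  -- lower bound on the pressure of the subsystem
  have hFss : ∀ x : ι, x ∈ F → x.1 ∈ shiftSpace T' := fun x hx => hWss _ (hFW x hx)
  have hDV : 0 < Dv * V := by positivity
  have prodsum : ∑' y : {x : ι // x ∈ F}, ENNReal.ofReal (Dv * f n y.1.1) =
      ENNReal.ofReal (Dv * V) := by
    have e1 : ∑' y : {x : ι // x ∈ F}, ENNReal.ofReal (Dv * f n y.1.1) =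
        ∑ x ∈ F, ENNReal.ofReal (Dv * f n x.1) :=
      Finset.tsum_subtype F (fun x => ENNReal.ofReal (Dv * f n x.1))
    rw [e1, ← ENNReal.ofReal_sum_of_nonneg
      (fun x _ => mul_nonneg hDv.le (hpos n hn0' x.1 x.2.1).le)]
    congr 1
    rw [hVdef, Finset.mul_sum]
  have base : ENNReal.ofReal (Dv * V) ≤ ZFun T' f n a := by
    rw [← prodsum]
    apply tsum_le_ZFun T' f (fun y : {x : ι // x ∈ F} => y.1.1)
      (fun y => ⟨hFss y.1 y.2, y.1.2.2.1, y.1.2.2.2⟩)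
      (fun y z hyz => Subtype.ext (Subtype.ext hyz))
      _ (fun y => ?_)
    nlinarith [hpos n hn0' y.1.1 y.1.2.1]
  have hstep : ∀ k : ℕ, 1 ≤ k → ENNReal.ofReal (Dv * V) ^ k ≤ ZFun T' f (k * n) a →
      ENNReal.ofReal (Dv * V) ^ (k + 1) ≤ ZFun T' f ((k + 1) * n) a := by
    intro k hk ih
    have hkn : 0 < k * n := Nat.mul_pos hk hn0'
    have hnle : n ≤ (k + 1) * n := Nat.le_mul_of_pos_left n (by omega)
    have hsplit : (k + 1) * n = n + k * n := by ring
    set κ := ({x : ι // x ∈ F} ×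
      {z : ℕ → S // z ∈ shiftSpace T' ∧ shf^[k * n] z = z ∧ z 0 = a}) with hκdef
    set G : κ → ℕ → S := fun pz => per ((k + 1) * n) (splice n pz.1.1.1 pz.2.1) with hGdef
    have hxn : ∀ pz : κ, pz.1.1.1 n = a := by
      intro pz
      have h1 := periodic_add pz.1.1.2.2.1 0
      rw [Nat.zero_add] at h1
      rw [h1, pz.1.1.2.2.2]
    have hsmem : ∀ pz : κ, splice n pz.1.1.1 pz.2.1 ∈ shiftSpace T' := by
      intro pz
      exact splice_mem (hFss _ pz.1.2) pz.2.2.1 (by rw [hxn pz, pz.2.2.2.2])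
    have hstop : ∀ pz : κ, splice n pz.1.1.1 pz.2.1 ((k + 1) * n) =
        splice n pz.1.1.1 pz.2.1 0 := by
      intro pz
      have h1 := periodic_add pz.2.2.2.1 0
      rw [Nat.zero_add] at h1
      rw [hsplit, splice_add, splice_lt hn0', h1, pz.2.2.2.2, pz.1.1.2.2.2]
    have hGmem : ∀ pz : κ, G pz ∈ shiftSpace T' :=
      fun pz => per_mem (hsmem pz) (hstop pz) (by omega)
    have hGper : ∀ pz : κ, shf^[(k + 1) * n] (G pz) = G pz := fun pz => per_periodic _
    have hGx : ∀ (pz : κ) (i : ℕ), i < n → G pz i = pz.1.1.1 i := by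
      intro pz i hi
      rw [hGdef]
      simp only
      rw [per_eq_of_lt (by omega), splice_lt hi]
    have hGz : ∀ (pz : κ) (i : ℕ), i < k * n → G pz (n + i) = pz.2.1 i := by
      intro pz i hi
      rw [hGdef]
      simp only
      rw [per_eq_of_lt (by omega), splice_add]
    have hG0 : ∀ pz : κ, G pz 0 = a := by
      intro pz
      rw [hGx pz 0 hn0', pz.1.1.2.2.2]
    have hinj : Function.Injective G := by
      intro pz pz' hG
      have hx : pz.1 = pz'.1 := by
        apply Subtype.ext
        apply Subtype.ext
        funext i
        have h1 := periodic_mod pz.1.1.2.2.1 hn0' i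
        have h2 := periodic_mod pz'.1.1.2.2.1 hn0' i
        have hmod : i % n < n := Nat.mod_lt _ hn0'
        rw [h1, h2, ← hGx pz _ hmod, ← hGx pz' _ hmod, hG]
      have hz : pz.2 = pz'.2 := by
        apply Subtype.ext
        funext i
        have h1 := periodic_mod pz.2.2.2.1 hkn i
        have h2 := periodic_mod pz'.2.2.2.1 hkn i
        have hmod : i % (k * n) < k * n := Nat.mod_lt _ hkn
        rw [h1, h2, ← hGz pz _ hmod, ← hGz pz' _ hmod, hG]
      exact Prod.ext hx hz
    have hval : ∀ pz : κ, Dv * f n pz.1.1.1 * f (k * n) pz.2.1 ≤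
        f ((k + 1) * n) (G pz) := by
      intro pz
      set y := G pz with hydef
      have hy : y ∈ shiftSpace T := SS_mono hsub (hGmem pz)
      have hyn : shf^[n] y ∈ shiftSpace T := mem_shift hy n
      have h5 := (hAA n (k * n) hn0' hkn y hy).1
      rw [← hsplit] at h5
      have hxmem : pz.1.1.1 ∈ shiftSpace T := pz.1.1.2.1
      have hzmem : pz.2.1 ∈ shiftSpace T := SS_mono hsub pz.2.2.1
      have b1 : f n pz.1.1.1 ≤ M * f n y :=
        hBowen n hn0' _ hxmem y hy (fun i hi => (hGx pz i hi).symm)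
      have b2 : f (k * n) pz.2.1 ≤ M * f (k * n) (shf^[n] y) := by
        apply hBowen _ hkn _ hzmem _ hyn
        intro i hi
        rw [shf_iter, ← hGz pz i hi]
        congr 1
        omega
      have p1 : 0 < f n pz.1.1.1 := hpos n hn0' _ hxmem
      have p2 : 0 < f (k * n) pz.2.1 := hpos _ hkn _ hzmem
      have p3 : 0 < f n y := hpos n hn0' y hy
      have p4 : 0 < f (k * n) (shf^[n] y) := hpos _ hkn _ hyn
      have c1 : Dv * f n pz.1.1.1 * f (k * n) pz.2.1 ≤
          Dv * (M * f n y) * (M * f (k * n) (shf^[n] y)) := by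
        apply mul_le_mul (mul_le_mul le_rfl b1 p1.le hDv.le) b2 p2.le (by positivity)
      have c2 : Dv * (M * f n y) * (M * f (k * n) (shf^[n] y)) =
          f n y * f (k * n) (shf^[n] y) * Real.exp (-C) := by
        rw [hDvdef]
        field_simp
      exact le_trans c1 (le_trans (le_of_eq c2) h5)
    have hsum := tsum_le_ZFun T' f G (fun pz => ⟨hGmem pz, hGper pz, hG0 pz⟩) hinj
      (fun pz => Dv * f n pz.1.1.1 * f (k * n) pz.2.1) hval
    have hfact : ∑' pz : κ, ENNReal.ofReal (Dv * f n pz.1.1.1 * f (k * n) pz.2.1) =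
        ENNReal.ofReal (Dv * V) * ZFun T' f (k * n) a := by
      show (∑' pz : ({x : ι // x ∈ F} ×
          {z : ℕ → S // z ∈ shiftSpace T' ∧ shf^[k * n] z = z ∧ z 0 = a}),
          ENNReal.ofReal (Dv * f n pz.1.1.1 * f (k * n) pz.2.1)) =
        ENNReal.ofReal (Dv * V) * ZFun T' f (k * n) a
      rw [ENNReal.tsum_prod']
      have hpt : ∀ (x : {x : ι // x ∈ F})
          (z : {z : ℕ → S // z ∈ shiftSpace T' ∧ shf^[k * n] z = z ∧ z 0 = a}),
          ENNReal.ofReal (Dv * f n x.1.1 * f (k * n) z.1) =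
            ENNReal.ofReal (Dv * f n x.1.1) * ENNReal.ofReal (f (k * n) z.1) := by
        intro x z
        rw [← ENNReal.ofReal_mul (mul_nonneg hDv.le (hpos n hn0' x.1.1 x.1.2.1).le)]
      calc (∑' (x : {x : ι // x ∈ F}) (z : {z : ℕ → S // z ∈ shiftSpace T' ∧
              shf^[k * n] z = z ∧ z 0 = a}),
            ENNReal.ofReal (Dv * f n x.1.1 * f (k * n) z.1))
          = ∑' (x : {x : ι // x ∈ F}), ENNReal.ofReal (Dv * f n x.1.1) *
              ZFun T' f (k * n) a := by
            congr 1
            funext x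
            rw [ZFun, ← ENNReal.tsum_mul_left]
            congr 1
            funext z
            exact hpt x z
        _ = ENNReal.ofReal (Dv * V) * ZFun T' f (k * n) a := by
            rw [ENNReal.tsum_mul_right, prodsum]
    rw [hfact] at hsum
    calc ENNReal.ofReal (Dv * V) ^ (k + 1)
        = ENNReal.ofReal (Dv * V) * ENNReal.ofReal (Dv * V) ^ k := by rw [pow_succ]; ring
      _ ≤ ENNReal.ofReal (Dv * V) * ZFun T' f (k * n) a := mul_le_mul_right ih _
      _ ≤ ZFun T' f ((k + 1) * n) a := hsum
  have Zlow : ∀ k : ℕ, 1 ≤ k → ENNReal.ofReal (Dv * V) ^ k ≤ ZFun T' f (k * n) a := by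
    intro k hk
    induction k with
    | zero => omega
    | succ k ih =>
      rcases Nat.eq_or_lt_of_le hk with h | h
      · rw [← h]
        simpa using base
      · exact hstep k (by omega) (ih (by omega))
  have hpressT' : ((Real.log (Dv * V) / n : ℝ) : EReal) ≤ press T' f a := by
    unfold press
    apply limsup_geo hDV hn1
    intro k hk
    rw [ENNReal.ofReal_pow hDV.le]
    exact Zlow k hk
  refine ⟨T', ⟨hsub, hsymb, hmix', hne⟩, le_trans ?_ hpressT'⟩
  apply EReal.coe_le_coe_iff.mpr
  have hlogV : t' * n - Real.log 2 < Real.log V := by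
    have h1 := Real.log_lt_log (by positivity) hVlow
    rwa [Real.log_div (Real.exp_pos _).ne' two_ne_zero, Real.log_exp] at h1
  have hlogDv : Real.log Dv = -C - (Real.log M + Real.log M) := by
    rw [hDvdef, Real.log_div (Real.exp_pos _).ne' (by positivity),
      Real.log_exp, Real.log_mul hM.ne' hM.ne']
  have hlogDV : Real.log (Dv * V) = Real.log Dv + Real.log V :=
    Real.log_mul hDv.ne' hVpos.ne'
  rw [le_div_iff₀ (by exact_mod_cast hn0' : (0:ℝ) < (n:ℝ))]
  have hthr := hn0 n hnn0
  rw [hlogDV, hlogDv]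
  nlinarith

end Sub

end PressAux

/-- Approximation of the pressure by topologically mixing finite-state Markov subshifts. -/
theorem pressure_approximation {S : Type*} [Countable S] (T : S → S → Prop)
    (hmix : ∀ a b : S, ∃ N : ℕ, ∀ n > N, ∃ x ∈ shiftSpace T, x 0 = a ∧ x n = b)
    (f : ℕ → (ℕ → S) → ℝ) (M C : ℝ) (hM : 0 < M) (hC : 0 ≤ C)
    (hpos : ∀ n, 0 < n → ∀ x ∈ shiftSpace T, 0 < f n x)
    (hBowen : ∀ n, 0 < n → ∀ x ∈ shiftSpace T, ∀ y ∈ shiftSpace T,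
      (∀ i < n, x i = y i) → f n x ≤ M * f n y)
    (hAA : ∀ n m, 0 < n → 0 < m → ∀ x ∈ shiftSpace T,
      f n x * f m (shf^[n] x) * Real.exp (-C) ≤ f (n + m) x ∧
        f (n + m) x ≤ Real.exp C * (f n x * f m (shf^[n] x))) :
    ∀ a : S, press T f a =
      ⨆ (T' : S → S → Prop) (_ : (∀ c d, T' c d → T c d) ∧
          {c | (∃ d, T' c d) ∨ (∃ d, T' d c)}.Finite ∧ SubMixing T' ∧
          (shiftSpace T').Nonempty),
        ⨆ b : S, press T' f b := by
  intro a
  apply le_antisymm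
  · apply PressAux.ereal_le_of_forall_lt
    intro t ht
    obtain ⟨T', hcond, hT't⟩ := PressAux.exists_subsystem hmix hM hC hpos hBowen hAA a t ht
    refine le_trans hT't ?_
    exact le_iSup_of_le T' (le_iSup_of_le hcond (le_iSup (fun b => press T' f b) a))
  · apply iSup_le
    intro T'
    apply iSup_le
    intro hcond
    apply iSup_le
    intro b
    exact le_trans (PressAux.press_mono hcond.1 f b)
      (PressAux.press_symbol_le hmix hM hC hpos hBowen hAA a b)
end
end

section
/- In the setting of the previous statement, for t ∈ ℝ define tF = {t log f_n}. Then P(tF) = lim_{n→∞} t(log c_n)/n + log(Σ_{i=1}^∞ λ_i^t), and there exists t' ≥ 0 such that P(tF) = +∞ for t < t' and P(tF) is finite for t > t'; on (t', ∞) the map t ↦ log Σ_i λ_i^t is real analytic, convex and decreasing. -/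
open scoped ENNReal
open Filter MeasureTheory

noncomputable section

/-- The full shift on the countable alphabet `ℕ`. -/
def Tfull : ℕ → ℕ → Prop := fun _ _ => True

/-- The locally constant sequence `f_n(x) = c_n λ_{x₀} ⋯ λ_{x_{n-1}}`. -/
def Ffs (c lam : ℕ → ℝ) : ℕ → (ℕ → ℕ) → ℝ :=
  fun n x => c n * ∏ i ∈ Finset.range n, lam (x i)

/-! ### Auxiliary lemmas -/

lemma shf_iterate {S : Type*} (x : ℕ → S) (n : ℕ) : shf^[n] x = fun i => x (i + n) := by
  induction n with
  | zero => simp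
  | succ k ih =>
    rw [Function.iterate_succ_apply', ih]
    funext i
    show x (i + 1 + k) = x (i + (k + 1))
    congr 1
    omega

lemma tsum_pi_prod (g : ℕ → ℝ≥0∞) : ∀ m : ℕ,
    (∑' w : Fin m → ℕ, ∏ j, g (w j)) = (∑' i, g i) ^ m := by
  intro m
  induction m with
  | zero =>
    haveI : Unique (Fin 0 → ℕ) := ⟨⟨fun i => i.elim0⟩, fun f => funext fun i => i.elim0⟩
    rw [tsum_eq_single default (fun b hb => absurd (Subsingleton.elim b default) hb)]
    simp
  | succ k ih =>
    rw [← (Fin.consEquiv (fun _ => ℕ)).tsum_eq, pow_succ]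
    have : ∀ p : ℕ × (Fin k → ℕ),
        (∏ j, g ((Fin.consEquiv (fun _ => ℕ) p) j)) = g p.1 * ∏ j, g (p.2 j) := by
      intro p
      rw [Fin.prod_univ_succ]
      simp [Fin.consEquiv]
    rw [tsum_congr this,
      ENNReal.tsum_prod (f := fun (n : ℕ) (v : Fin k → ℕ) => g n * ∏ j, g (v j))]
    simp_rw [ENNReal.tsum_mul_left, ← ih]
    rw [ENNReal.tsum_mul_right]
    ring

/-- the periodic sequence determined by a word -/
def perSeq (a : ℕ) {m : ℕ} (w : Fin m → ℕ) : ℕ → ℕ :=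
  fun i => Fin.cons (α := fun _ => ℕ) a w ⟨i % (m+1), Nat.mod_lt _ (Nat.succ_pos m)⟩

/-- the periodic-point parametrization -/
def perEquiv (a : ℕ) (m : ℕ) :
    (Fin m → ℕ) ≃ {x : ℕ → ℕ // x ∈ shiftSpace Tfull ∧ shf^[m+1] x = x ∧ x 0 = a} where
  toFun w := ⟨perSeq a w,
    by
      refine ⟨fun i => trivial, ?_, ?_⟩
      · rw [shf_iterate]
        funext i
        simp only [perSeq, Nat.add_mod_right]
      · simp [perSeq]⟩
  invFun x := fun j : Fin m => x.1 (j + 1)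
  left_inv w := by
    funext j
    show perSeq a w ((j : ℕ) + 1) = w j
    unfold perSeq
    have hj : (⟨((j : ℕ) + 1) % (m+1), Nat.mod_lt _ (Nat.succ_pos m)⟩ : Fin (m+1)) =
        Fin.succ j := by
      apply Fin.ext
      simp [Nat.mod_eq_of_lt (by omega : (j : ℕ) + 1 < m + 1)]
    rw [hj, Fin.cons_succ]
  right_inv := by
    rintro ⟨x, -, hper, h0⟩
    rw [shf_iterate] at hper
    have hkey : ∀ q r, x (r + (m+1) * q) = x r := by
      intro q
      induction q with
      | zero => simp
      | succ p ih =>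
        intro r
        have : r + (m+1) * (p+1) = (r + (m+1) * p) + (m+1) := by ring
        rw [this, congrFun hper (r + (m+1)*p), ih]
    have hmod : ∀ i, x (i % (m+1)) = x i := by
      intro i
      conv_rhs => rw [← Nat.mod_add_div i (m+1)]
      exact (hkey (i / (m+1)) (i % (m+1))).symm
    ext i
    show perSeq a (fun j : Fin m => x ((j : ℕ) + 1)) i = x i
    unfold perSeq
    rcases Nat.eq_zero_or_pos ((i : ℕ) % (m+1)) with h | h
    · have heq : (⟨i % (m+1), Nat.mod_lt _ (Nat.succ_pos m)⟩ : Fin (m+1)) = 0 := by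
        apply Fin.ext; simp [h]
      rw [heq, Fin.cons_zero, ← h0, ← hmod i, h]
    · obtain ⟨k, hk⟩ : ∃ k, i % (m+1) = k + 1 := ⟨i % (m+1) - 1, by omega⟩
      have hklt : k < m := by
        have h2 : i % (m+1) < m + 1 := Nat.mod_lt _ (by omega)
        omega
      have heq : (⟨i % (m+1), Nat.mod_lt _ (Nat.succ_pos m)⟩ : Fin (m+1)) =
          Fin.succ ⟨k, hklt⟩ := by
        apply Fin.ext; simp [hk]
      rw [heq, Fin.cons_succ, ← hmod i, hk]

lemma ZFun_eq (lam c : ℕ → ℝ) (hlam : ∀ j, 0 < lam j) (t : ℝ) (a m : ℕ)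
    (hc : 0 ≤ c (m+1)) :
    ZFun Tfull (fun n x => Ffs c lam n x ^ t) (m+1) a
      = ENNReal.ofReal (c (m+1) ^ t) * ENNReal.ofReal (lam a ^ t) *
        (∑' i : ℕ, ENNReal.ofReal (lam i ^ t)) ^ m := by
  rw [ZFun, ← (perEquiv a m).tsum_eq]
  have hterm : ∀ w : Fin m → ℕ,
      ENNReal.ofReal (Ffs c lam (m+1) (perSeq a w) ^ t)
        = ENNReal.ofReal (c (m+1) ^ t) * (ENNReal.ofReal (lam a ^ t) *
            ∏ j : Fin m, ENNReal.ofReal (lam (w j) ^ t)) := by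
    intro w
    have hprod : ∏ i ∈ Finset.range (m+1), lam (perSeq a w i)
        = lam a * ∏ j : Fin m, lam (w j) := by
      rw [← Fin.prod_univ_eq_prod_range (fun i => lam (perSeq a w i)) (m+1)]
      have : ∀ j : Fin (m+1), lam (perSeq a w (j : ℕ)) =
          lam (Fin.cons (α := fun _ => ℕ) a w j) := by
        intro j
        congr 1
        show Fin.cons (α := fun _ => ℕ) a w ⟨(j:ℕ) % (m+1), _⟩ = _
        congr 1
        apply Fin.ext
        simp [Nat.mod_eq_of_lt j.isLt]
      rw [Finset.prod_congr rfl (fun j _ => this j), Fin.prod_univ_succ, Fin.cons_zero]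
      congr 1
    have hP : (0:ℝ) ≤ ∏ j : Fin m, lam (w j) :=
      Finset.prod_nonneg fun j _ => (hlam _).le
    rw [Ffs, hprod, Real.mul_rpow hc (mul_nonneg (hlam a).le hP),
      Real.mul_rpow (hlam a).le hP, ← Real.finset_prod_rpow _ _ (fun j _ => (hlam _).le) t,
      ENNReal.ofReal_mul (Real.rpow_nonneg hc t),
      ENNReal.ofReal_mul (Real.rpow_nonneg (hlam a).le t),
      ENNReal.ofReal_prod_of_nonneg (fun j _ => Real.rpow_nonneg (hlam _).le t)]
  calc (∑' w : Fin m → ℕ, ENNReal.ofReal (Ffs c lam (m+1) ((perEquiv a m) w).1 ^ t))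
      = ∑' w : Fin m → ℕ, ENNReal.ofReal (c (m+1) ^ t) * (ENNReal.ofReal (lam a ^ t) *
          ∏ j : Fin m, ENNReal.ofReal (lam (w j) ^ t)) := tsum_congr hterm
    _ = ENNReal.ofReal (c (m+1) ^ t) * (ENNReal.ofReal (lam a ^ t) *
          ∑' w : Fin m → ℕ, ∏ j : Fin m, ENNReal.ofReal (lam (w j) ^ t)) := by
        rw [ENNReal.tsum_mul_left, ENNReal.tsum_mul_left]
    _ = ENNReal.ofReal (c (m+1) ^ t) * ENNReal.ofReal (lam a ^ t) *
          (∑' i : ℕ, ENNReal.ofReal (lam i ^ t)) ^ m := by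
        rw [tsum_pi_prod (fun i => ENNReal.ofReal (lam i ^ t)) m, mul_assoc]

lemma press_formula (lam : ℕ → ℝ) (hlam : ∀ j, 0 < lam j)
    (c : ℕ → ℝ) (hcpos : ∀ n, 0 < n → 0 < c n) (ℓ : ℝ)
    (hℓ : Tendsto (fun n : ℕ => Real.log (c n) / n) atTop (nhds ℓ)) (t : ℝ) (a : ℕ) :
    press Tfull (fun n x => Ffs c lam n x ^ t) a =
      ((t * ℓ : ℝ) : EReal) + ENNReal.log (∑' i : ℕ, ENNReal.ofReal (lam i ^ t)) := by
  set S : ℝ≥0∞ := ∑' i : ℕ, ENNReal.ofReal (lam i ^ t) with hS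
  have hZ : ∀ m : ℕ, ZFun Tfull (fun n x => Ffs c lam n x ^ t) (m+1) a
      = ENNReal.ofReal (c (m+1) ^ t) * ENNReal.ofReal (lam a ^ t) * S ^ m :=
    fun m => ZFun_eq lam c hlam t a m (hcpos _ (Nat.succ_pos m)).le
  have hcne : ∀ m : ℕ, ENNReal.ofReal (c (m+1) ^ t) ≠ 0 := fun m => by
    simp [ENNReal.ofReal_eq_zero, not_le, Real.rpow_pos_of_pos (hcpos _ (Nat.succ_pos m))]
  have hane : ENNReal.ofReal (lam a ^ t) ≠ 0 := by
    simp [ENNReal.ofReal_eq_zero, not_le, Real.rpow_pos_of_pos (hlam a)]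
  rcases eq_or_ne S ⊤ with hStop | hStop
  · -- infinite case
    have hev : ∀ᶠ n in atTop, (fun n : ℕ =>
        ENNReal.log (ZFun Tfull (fun n x => Ffs c lam n x ^ t) n a) / ((n : ℝ) : EReal)) n
          = (⊤ : EReal) := by
      filter_upwards [eventually_ge_atTop 2] with n hn
      obtain ⟨m, rfl⟩ : ∃ m, n = m + 1 := ⟨n - 1, by omega⟩
      have hm : 0 < m := by omega
      have : ZFun Tfull (fun n x => Ffs c lam n x ^ t) (m+1) a = ⊤ := by
        rw [hZ m, hStop, ENNReal.top_pow hm.ne', ENNReal.mul_top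
          (mul_ne_zero (hcne m) hane)]
      rw [this, ENNReal.log_top]
      exact EReal.top_div_of_pos_ne_top (EReal.coe_pos.2 (by positivity))
        (EReal.coe_ne_top _)
    rw [press, limsup_congr hev, limsup_const, hStop, ENNReal.log_top, EReal.coe_add_top]
  · -- finite case
    have hpos0 : 0 < ENNReal.ofReal (lam 0 ^ t) :=
      ENNReal.ofReal_pos.2 (Real.rpow_pos_of_pos (hlam 0) t)
    have hSne : S ≠ 0 := fun h0 => (lt_of_lt_of_le hpos0 (ENNReal.le_tsum 0)).ne' h0
    set L : ℝ := Real.log S.toReal with hL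
    have hlogS : ENNReal.log S = (L : EReal) := by
      rw [ENNReal.log, if_neg hSne, if_neg hStop]
    set φ : ℕ → ℝ := fun n =>
      (t * Real.log (c n) + t * Real.log (lam a) + ((n : ℝ) - 1) * L) / n with hφ
    have hev : ∀ᶠ n in atTop, (fun n : ℕ =>
        ENNReal.log (ZFun Tfull (fun n x => Ffs c lam n x ^ t) n a) / ((n : ℝ) : EReal)) n
          = ((φ n : ℝ) : EReal) := by
      filter_upwards [eventually_ge_atTop 1] with n hn
      obtain ⟨m, rfl⟩ : ∃ m, n = m + 1 := ⟨n - 1, by omega⟩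
      have hlogZ : ENNReal.log (ZFun Tfull (fun n x => Ffs c lam n x ^ t) (m+1) a)
          = (((t * Real.log (c (m+1)) + t * Real.log (lam a) + (m : ℝ) * L : ℝ)) : EReal) := by
        rw [hZ m, ENNReal.log_mul_add, ENNReal.log_mul_add, ENNReal.log_pow, hlogS,
          ENNReal.log_ofReal_of_pos (Real.rpow_pos_of_pos (hcpos _ (Nat.succ_pos m)) t),
          ENNReal.log_ofReal_of_pos (Real.rpow_pos_of_pos (hlam a) t),
          Real.log_rpow (hcpos _ (Nat.succ_pos m)), Real.log_rpow (hlam a)]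
        norm_cast
      rw [hlogZ, ← EReal.coe_div]
      congr 1
      simp only [hφ]
      push_cast
      ring_nf
    have hφtendsto : Tendsto φ atTop (nhds (t * ℓ + L)) := by
      have h1 : Tendsto (fun n : ℕ => t * (Real.log (c n) / n)) atTop (nhds (t * ℓ)) :=
        hℓ.const_mul t
      have h2 : Tendsto (fun n : ℕ => (t * Real.log (lam a)) / n) atTop (nhds 0) :=
        tendsto_const_div_atTop_nhds_zero_nat _
      have h3 : Tendsto (fun n : ℕ => (1 - 1 / (n:ℝ)) * L) atTop (nhds L) := by
        have := (tendsto_const_nhds (x := (1:ℝ)) (f := atTop (α := ℕ))).sub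
          (tendsto_one_div_atTop_nhds_zero_nat)
        simpa using this.mul_const L
      have hsum : Tendsto (fun n : ℕ => t * (Real.log (c n) / n)
          + (t * Real.log (lam a)) / n + (1 - 1 / (n:ℝ)) * L) atTop
          (nhds (t * ℓ + 0 + L)) := (h1.add h2).add h3
      rw [add_zero] at hsum
      refine hsum.congr' ?_
      filter_upwards [eventually_ge_atTop 1] with n hn
      have hn' : (n:ℝ) ≠ 0 := by positivity
      simp only [hφ]
      field_simp
    have hcoe : Tendsto (fun n : ℕ => ((φ n : ℝ) : EReal)) atTop
        (nhds ((t * ℓ + L : ℝ) : EReal)) := EReal.tendsto_coe.2 hφtendsto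
    rw [press, limsup_congr hev, hcoe.limsup_eq, hlogS, ← EReal.coe_add]

lemma analytic_aux (lam : ℕ → ℝ) (hlam : ∀ j, lam j ∈ Set.Ioo (0 : ℝ) 1)
    (t t₀ : ℝ) (ht₀ : t₀ < t) (hsum₀ : Summable fun i => lam i ^ t₀)
    (hsumt : Summable fun i => lam i ^ t) :
    AnalyticAt ℝ (fun s : ℝ => Real.log (∑' i : ℕ, lam i ^ s)) t := by
  set F : ℕ → ℂ → ℂ := fun i z => Complex.exp (z * (Real.log (lam i) : ℂ)) with hF
  set U : Set ℂ := {z : ℂ | t₀ < z.re} with hU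
  have hUopen : IsOpen U := isOpen_lt continuous_const Complex.continuous_re
  have hbound : ∀ (i : ℕ) (z : ℂ), z ∈ U → ‖F i z‖ ≤ lam i ^ t₀ := by
    intro i z hz
    have h1 : ‖F i z‖ = Real.exp (z.re * Real.log (lam i)) := by
      rw [hF]
      simp only [Complex.norm_exp]
      congr 1
      simp [Complex.mul_re]
    rw [h1, mul_comm, ← Real.rpow_def_of_pos (hlam i).1]
    exact Real.rpow_le_rpow_of_exponent_ge (hlam i).1 (hlam i).2.le hz.le
  have hGdiff : DifferentiableOn ℂ (fun z => ∑' i, F i z) U := by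
    refine Complex.differentiableOn_tsum_of_summable_norm hsum₀ (fun i => ?_) hUopen hbound
    exact ((differentiable_id.mul_const _).cexp).differentiableOn
  have hGt : AnalyticAt ℂ (fun z => ∑' i, F i z) (t : ℂ) :=
    hGdiff.analyticAt (hUopen.mem_nhds (by simpa [hU] using ht₀))
  have hgeq : ∀ s : ℝ, (∑' i, F i (s : ℂ)) = ((∑' i : ℕ, lam i ^ s : ℝ) : ℂ) := by
    intro s
    rw [Complex.ofReal_tsum]
    congr 1
    funext i
    rw [hF]
    push_cast
    rw [← Complex.ofReal_mul, ← Complex.ofReal_exp]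
    norm_cast
    rw [mul_comm, ← Real.rpow_def_of_pos (hlam i).1]
  have hganal : AnalyticAt ℝ (fun s : ℝ => ∑' i : ℕ, lam i ^ s) t := by
    have h1 : AnalyticAt ℝ
        (fun s : ℝ => (Complex.reCLM) ((∑' i, F i ((Complex.ofRealCLM) s)))) t := by
      refine (Complex.reCLM.analyticAt _).comp ?_
      exact (hGt.restrictScalars).comp (Complex.ofRealCLM.analyticAt t)
    refine h1.congr ?_
    filter_upwards with s
    simp only [Complex.ofRealCLM_apply, Complex.reCLM_apply, hgeq s, Complex.ofReal_re]
  have hpos : 0 < ∑' i : ℕ, lam i ^ t :=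
    Summable.tsum_pos hsumt (fun i => Real.rpow_nonneg (hlam i).1.le t) 0
      (Real.rpow_pos_of_pos (hlam 0).1 t)
  have hclog' : AnalyticAt ℝ (⇑Complex.reCLM ∘ (Complex.log ∘ (⇑Complex.ofRealCLM ∘
      (fun s : ℝ => ∑' i : ℕ, lam i ^ s)))) t := by
    refine (Complex.reCLM.analyticAt _).comp ?_
    refine AnalyticAt.comp ?_ ((Complex.ofRealCLM.analyticAt _).comp hganal)
    refine (analyticAt_clog ?_).restrictScalars
    rw [Complex.mem_slitPlane_iff]
    left
    simpa using hpos
  have hclog : AnalyticAt ℝ (fun s : ℝ =>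
      (Complex.log ((∑' i : ℕ, lam i ^ s : ℝ) : ℂ)).re) t := hclog'
  refine hclog.congr ?_
  filter_upwards with s
  rw [Complex.log_ofReal_re]

/-- Behaviour of the pressure function `t ↦ P(tF)` for the full-shift example: explicit
formula, a finiteness phase transition at some `t' ≥ 0`, and real analyticity, convexity
and monotonicity of `t ↦ log Σ λ_i^t` on `(t', ∞)`. -/
theorem full_shift_pressure_function (lam : ℕ → ℝ)
    (hlam : ∀ j, lam j ∈ Set.Ioo (0 : ℝ) 1) (hsum : Summable lam)
    (c : ℕ → ℝ) (C : ℝ) (hC : 0 ≤ C) (hcpos : ∀ n, 0 < n → 0 < c n)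
    (hcAA : ∀ n m, 0 < n → 0 < m →
      Real.exp (-C) * (c n * c m) ≤ c (n + m) ∧ c (n + m) ≤ Real.exp C * (c n * c m)) :
    ∃ ℓ : ℝ, Tendsto (fun n : ℕ => Real.log (c n) / n) atTop (nhds ℓ) ∧
      (∀ t : ℝ, ∀ a : ℕ,
        press Tfull (fun n x => Ffs c lam n x ^ t) a =
          ((t * ℓ : ℝ) : EReal) + ENNReal.log (∑' i : ℕ, ENNReal.ofReal (lam i ^ t))) ∧
      ∃ t' : ℝ, 0 ≤ t' ∧
        (∀ t : ℝ, t < t' → ∀ a : ℕ, press Tfull (fun n x => Ffs c lam n x ^ t) a = ⊤) ∧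
        (∀ t : ℝ, t' < t → ∀ a : ℕ, press Tfull (fun n x => Ffs c lam n x ^ t) a ≠ ⊤) ∧
        (∀ t ∈ Set.Ioi t', AnalyticAt ℝ (fun s : ℝ => Real.log (∑' i : ℕ, lam i ^ s)) t) ∧
        ConvexOn ℝ (Set.Ioi t') (fun s : ℝ => Real.log (∑' i : ℕ, lam i ^ s)) ∧
        AntitoneOn (fun s : ℝ => Real.log (∑' i : ℕ, lam i ^ s)) (Set.Ioi t') := by
  -- Part A : the limit ℓ (Fekete)
  obtain ⟨ℓ, hℓ⟩ : ∃ ℓ : ℝ, Tendsto (fun n : ℕ => Real.log (c n) / n) atTop (nhds ℓ) := by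
    set u : ℕ → ℝ := fun n => if n = 0 then C else Real.log (c n) + C with hu
    have hsub : Subadditive u := by
      intro n m
      rcases Nat.eq_zero_or_pos n with hn | hn
      · subst hn; simp [hu, hC]
      rcases Nat.eq_zero_or_pos m with hm | hm
      · subst hm; simp [hu, hn.ne', hC]
      have h2 := (hcAA n m hn hm).2
      have hcn := hcpos n hn
      have hcm := hcpos m hm
      have : Real.log (c (n + m)) ≤ C + (Real.log (c n) + Real.log (c m)) := by
        calc Real.log (c (n + m)) ≤ Real.log (Real.exp C * (c n * c m)) :=
              Real.log_le_log (hcpos _ (by omega)) h2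
          _ = C + (Real.log (c n) + Real.log (c m)) := by
              rw [Real.log_mul (Real.exp_ne_zero _) (by positivity), Real.log_exp,
                Real.log_mul hcn.ne' hcm.ne']
      simp only [hu, if_neg hn.ne', if_neg hm.ne', if_neg (by omega : ¬ n + m = 0)]
      linarith
    have hlow : ∀ n, 0 < n → n * (Real.log (c 1) - C) + C ≤ Real.log (c n) := by
      intro n hn
      induction n with
      | zero => omega
      | succ k ih =>
        rcases Nat.eq_zero_or_pos k with hk | hk
        · subst hk; simp
        have h1 := (hcAA k 1 hk one_pos).1
        have : Real.log (c k) + Real.log (c 1) - C ≤ Real.log (c (k + 1)) := by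
          calc Real.log (c k) + Real.log (c 1) - C
              = Real.log (Real.exp (-C) * (c k * c 1)) := by
                rw [Real.log_mul (Real.exp_ne_zero _)
                  (mul_pos (hcpos k hk) (hcpos 1 one_pos)).ne', Real.log_exp,
                  Real.log_mul (hcpos k hk).ne' (hcpos 1 one_pos).ne']
                ring
            _ ≤ Real.log (c (k + 1)) := Real.log_le_log
                (mul_pos (Real.exp_pos _) (mul_pos (hcpos k hk) (hcpos 1 one_pos))) h1
        have ihk := ih hk
        push_cast
        push_cast at ihk
        nlinarith
    have hbdd : BddBelow (Set.range fun n : ℕ => u n / n) := by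
      refine ⟨min 0 (Real.log (c 1) - C), ?_⟩
      rintro x ⟨n, rfl⟩
      rcases Nat.eq_zero_or_pos n with hn | hn
      · subst hn; simp
      have h := hlow n hn
      simp only [hu, if_neg hn.ne']
      have hn' : (0:ℝ) < n := by exact_mod_cast hn
      refine le_trans (min_le_right _ _) ?_
      rw [le_div_iff₀ hn']
      nlinarith
    have := hsub.tendsto_lim hbdd
    refine ⟨hsub.lim, ?_⟩
    have h2 : Tendsto (fun n : ℕ => u n / n - C / n) atTop (nhds (hsub.lim - 0)) :=
      this.sub (tendsto_const_div_atTop_nhds_zero_nat C)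
    rw [sub_zero] at h2
    refine h2.congr' ?_
    filter_upwards [eventually_ge_atTop 1] with n hn
    simp only [hu, if_neg (by omega : ¬ n = 0)]
    field_simp
    ring
  refine ⟨ℓ, hℓ, fun t a => press_formula lam (fun j => (hlam j).1) c hcpos ℓ hℓ t a, ?_⟩
  -- Part C : the critical exponent t'
  set Sfin : Set ℝ := {s : ℝ | Summable fun i => lam i ^ s} with hSfin
  have hmono : ∀ {p q : ℝ}, p ≤ q → p ∈ Sfin → q ∈ Sfin := by
    intro p q hpq hp
    refine Summable.of_nonneg_of_le (fun i => Real.rpow_nonneg (hlam i).1.le q)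
      (fun i => Real.rpow_le_rpow_of_exponent_ge (hlam i).1 (hlam i).2.le hpq) hp
  have h1mem : (1:ℝ) ∈ Sfin := by
    refine (summable_congr fun i => ?_).2 hsum
    exact Real.rpow_one _
  have hposS : ∀ s ∈ Sfin, 0 < s := by
    intro s hs
    by_contra h
    push_neg at h
    have hone : ∀ i, 1 ≤ lam i ^ s := fun i =>
      Real.one_le_rpow_of_pos_of_le_one_of_nonpos (hlam i).1 (hlam i).2.le h
    have h0 := hs.tendsto_atTop_zero
    have h1 := h0.eventually_lt_const one_pos
    obtain ⟨n, hn⟩ := h1.exists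
    exact absurd (hone n) (not_le.mpr hn)
  have hbddS : BddBelow Sfin := ⟨0, fun s hs => (hposS s hs).le⟩
  set t' : ℝ := sInf Sfin with ht'
  have ht'0 : 0 ≤ t' := le_csInf ⟨1, h1mem⟩ fun s hs => (hposS s hs).le
  have hsumm : ∀ s : ℝ, t' < s → Summable fun i => lam i ^ s := by
    intro s hs
    obtain ⟨p, hp, hps⟩ := exists_lt_of_csInf_lt ⟨1, h1mem⟩ hs
    exact hmono hps.le hp
  have hpos : ∀ s : ℝ, t' < s → 0 < ∑' i : ℕ, lam i ^ s := fun s hs =>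
    Summable.tsum_pos (hsumm s hs) (fun i => Real.rpow_nonneg (hlam i).1.le s) 0
      (Real.rpow_pos_of_pos (hlam 0).1 s)
  refine ⟨t', ht'0, ?_, ?_, ?_, ?_, ?_⟩
  · -- t < t' : pressure is ⊤
    intro t ht a
    have htn : t ∉ Sfin := fun hmem => absurd (csInf_le hbddS hmem) (not_le.mpr ht)
    have hStop : (∑' i : ℕ, ENNReal.ofReal (lam i ^ t)) = ⊤ := by
      by_contra h
      have h2 := ENNReal.summable_toReal h
      refine htn ((summable_congr fun i => ?_).1 h2)
      rw [ENNReal.toReal_ofReal (Real.rpow_nonneg (hlam i).1.le t)]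
    rw [press_formula lam (fun j => (hlam j).1) c hcpos ℓ hℓ t a, hStop, ENNReal.log_top,
      EReal.coe_add_top]
  · -- t > t' : pressure is finite
    intro t ht a
    have hsummt := hsumm t ht
    have hSfin' : (∑' i : ℕ, ENNReal.ofReal (lam i ^ t)) ≠ ⊤ := by
      rw [← ENNReal.ofReal_tsum_of_nonneg (fun i => Real.rpow_nonneg (hlam i).1.le t) hsummt]
      exact ENNReal.ofReal_ne_top
    rw [press_formula lam (fun j => (hlam j).1) c hcpos ℓ hℓ t a]
    exact (EReal.add_lt_top (EReal.coe_ne_top _)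
      (fun h => hSfin' (ENNReal.log_eq_top_iff.1 h))).ne
  · -- analyticity
    intro t ht
    exact analytic_aux lam hlam t ((t' + t)/2) (by simpa using by linarith [Set.mem_Ioi.1 ht])
      (hsumm _ (by linarith [Set.mem_Ioi.1 ht])) (hsumm t ht)
  · -- convexity
    refine ⟨convex_Ioi t', ?_⟩
    intro x hx y hy θ₁ θ₂ hθ₁ hθ₂ hθs
    rcases eq_or_lt_of_le hθ₁ with h1 | h1
    · simp only [← h1] at hθs ⊢
      simp only [zero_smul, zero_add, smul_eq_mul]
      rw [show θ₂ = 1 by linarith]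
      simp
    rcases eq_or_lt_of_le hθ₂ with h2 | h2
    · simp only [← h2] at hθs ⊢
      simp only [zero_smul, add_zero, smul_eq_mul]
      rw [show θ₁ = 1 by linarith]
      simp
    have hθ₁1 : θ₁ < 1 := by linarith
    have hpq : Real.HolderConjugate (1/θ₁) (1/θ₂) := by
      rw [Real.holderConjugate_iff]
      constructor
      · rw [lt_div_iff₀ h1]; linarith
      · rw [one_div, inv_inv, one_div, inv_inv]; exact hθs
    have sm : θ₁ • x + θ₂ • y ∈ Set.Ioi t' := (convex_Ioi t') hx hy hθ₁ hθ₂ hθs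
    set f : ℕ → ℝ := fun i => lam i ^ (x * θ₁) with hf
    set g : ℕ → ℝ := fun i => lam i ^ (y * θ₂) with hg
    have hrw : ∀ (s θ : ℝ), θ ≠ 0 → ∀ i, (lam i ^ (s * θ)) ^ (1/θ) = lam i ^ s := by
      intro s θ hθ i
      rw [← Real.rpow_mul (hlam i).1.le]
      congr 1
      field_simp
    have hfs : Summable fun i => f i ^ (1/θ₁) :=
      (summable_congr fun i => hrw x θ₁ h1.ne' i).2 (hsumm x hx)
    have hgs : Summable fun i => g i ^ (1/θ₂) :=
      (summable_congr fun i => hrw y θ₂ h2.ne' i).2 (hsumm y hy)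
    have hfnn : ∀ i, 0 ≤ f i := fun i => Real.rpow_nonneg (hlam i).1.le _
    have hgnn : ∀ i, 0 ≤ g i := fun i => Real.rpow_nonneg (hlam i).1.le _
    have hholder := Real.inner_le_Lp_mul_Lq_tsum_of_nonneg hpq hfnn hgnn hfs hgs
    have hfg : ∀ i, f i * g i = lam i ^ (θ₁ • x + θ₂ • y) := by
      intro i
      rw [hf, hg, ← Real.rpow_add (hlam i).1, smul_eq_mul, smul_eq_mul]
      ring_nf
    have hfp : ∀ i, f i ^ (1/θ₁) = lam i ^ x := fun i => hrw x θ₁ h1.ne' i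
    have hgq : ∀ i, g i ^ (1/θ₂) = lam i ^ y := fun i => hrw y θ₂ h2.ne' i
    have key : ∑' i, lam i ^ (θ₁ • x + θ₂ • y) ≤
        (∑' i, lam i ^ x) ^ (1/(1/θ₁)) * (∑' i, lam i ^ y) ^ (1/(1/θ₂)) := by
      calc ∑' i, lam i ^ (θ₁ • x + θ₂ • y) = ∑' i, f i * g i := by
            rw [tsum_congr hfg]
        _ ≤ (∑' i, f i ^ (1/θ₁)) ^ (1/(1/θ₁)) * (∑' i, g i ^ (1/θ₂)) ^ (1/(1/θ₂)) :=
            hholder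
        _ = (∑' i, lam i ^ x) ^ (1/(1/θ₁)) * (∑' i, lam i ^ y) ^ (1/(1/θ₂)) := by
            rw [tsum_congr hfp, tsum_congr hgq]
    rw [one_div_one_div, one_div_one_div] at key
    have hXpos := hpos x hx
    have hYpos := hpos y hy
    have hZpos := hpos _ sm
    simp only [smul_eq_mul] at key hZpos ⊢
    calc Real.log (∑' i, lam i ^ (θ₁ * x + θ₂ * y))
        ≤ Real.log ((∑' i, lam i ^ x) ^ θ₁ * (∑' i, lam i ^ y) ^ θ₂) :=
          Real.log_le_log hZpos key
      _ = θ₁ * Real.log (∑' i, lam i ^ x) + θ₂ * Real.log (∑' i, lam i ^ y) := by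
          rw [Real.log_mul (Real.rpow_pos_of_pos hXpos θ₁).ne'
            (Real.rpow_pos_of_pos hYpos θ₂).ne', Real.log_rpow hXpos, Real.log_rpow hYpos]
  · -- antitone
    intro u hu v hv huv
    simp only
    have h1 : ∑' i : ℕ, lam i ^ v ≤ ∑' i : ℕ, lam i ^ u :=
      Summable.tsum_le_tsum (fun i => Real.rpow_le_rpow_of_exponent_ge (hlam i).1 (hlam i).2.le huv)
        (hsumm v hv) (hsumm u hu)
    exact Real.log_le_log (hpos v hv) h1
end
end

section
/- (Bowen formula, upper bound) Consider a nested geometric construction {Δ_{i₀…i_{n−1}}} of closed non-overlapping intervals in [0,1] with lengths r_{i₀…i_{n−1}}, coded by the full shift on ℕ, and limit set K = ∩_n ∪ Δ_{i₀…i_{n−1}}. If s ∈ ℝ is such that the pressure P(sF) < 0, where F = {φ_n} with φ_n = log r_{i₀…i_{n−1}} on cylinders, then the s-dimensional Hausdorff measure of K is zero; hence dim_H(K) ≤ inf{ t : P(tF) ≤ 0 }. -/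
open scoped ENNReal
open Filter MeasureTheory

noncomputable section

/-- The pressure of the sequence `sF`, `F = {log r_{i₀…i_{n-1}}}`, for the geometric
construction with lengths `r` (as a `limsup`). -/
def pressS (r : (n : ℕ) → (Fin n → ℕ) → ℝ) (s : ℝ) : EReal :=
  Filter.atTop.limsup (fun n : ℕ =>
    ENNReal.log (∑' w : Fin n → ℕ, ENNReal.ofReal (r n w ^ s)) / ((n : ℝ) : EReal))

/-- The limit set of the nested interval construction. -/
def limitSet (Δ : (n : ℕ) → (Fin n → ℕ) → Set ℝ) : Set ℝ :=
  ⋂ n : ℕ, ⋃ w : Fin n → ℕ, Δ n w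

/-- Bowen-formula upper bound: if `P(sF) < 0` then the `s`-Hausdorff measure of the limit
set vanishes; hence `dim_H K ≤ inf {t : P(tF) ≤ 0}`. -/
theorem bowen_formula_upper_bound
    (r : (n : ℕ) → (Fin n → ℕ) → ℝ) (Δ : (n : ℕ) → (Fin n → ℕ) → Set ℝ) (C : ℝ) (hC : 0 ≤ C)
    (hrpos : ∀ n w, 0 < r n w)
    (hIcc : ∀ n w, ∃ p q : ℝ, p ≤ q ∧ Δ n w = Set.Icc p q ∧ q - p = r n w)
    (hsub : ∀ n w, Δ n w ⊆ Set.Icc (0 : ℝ) 1)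
    (hnest : ∀ (n : ℕ) (w : Fin n → ℕ) (m : ℕ), Δ (n + 1) (Fin.snoc w m) ⊆ Δ n w)
    (hdisj : ∀ (n : ℕ) (w w' : Fin n → ℕ), w ≠ w' → Disjoint (Δ n w) (Δ n w'))
    (hAA : ∀ (n m : ℕ) (w : Fin n → ℕ) (w' : Fin m → ℕ),
      r n w * r m w' * Real.exp (-C) ≤ r (n + m) (Fin.append w w') ∧
        r (n + m) (Fin.append w w') ≤ r n w * r m w' * Real.exp C) :
    (∀ s : ℝ, pressS r s < 0 → μH[s] (limitSet Δ) = 0) ∧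
    dimH (limitSet Δ) ≤
      sInf {u : ℝ≥0∞ | ∃ t : ℝ, 0 ≤ t ∧ u = ENNReal.ofReal t ∧ pressS r t ≤ 0} := by
  classical
  -- every basic interval has length at most 1
  have hr1 : ∀ n w, r n w ≤ 1 := by
    intro n w
    obtain ⟨p, q, hpq, hΔ, hlen⟩ := hIcc n w
    have h0 : Set.Icc p q ⊆ Set.Icc (0 : ℝ) 1 := hΔ ▸ hsub n w
    obtain ⟨hp, hq⟩ := (Set.Icc_subset_Icc_iff hpq).1 h0
    linarith
  -- distinct last letters give distinct words
  have hsnoc_ne : ∀ (n : ℕ) (w : Fin n → ℕ) (m m' : ℕ), m ≠ m' →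
      (Fin.snoc w m : Fin (n + 1) → ℕ) ≠ Fin.snoc w m' := by
    intro n w m m' hmm h
    apply hmm
    have := congrFun h (Fin.last n)
    simpa using this
  -- two distinct children have total length at most the parent's length
  have hsib : ∀ (n : ℕ) (w : Fin n → ℕ) (m m' : ℕ), m ≠ m' →
      r (n + 1) (Fin.snoc w m) + r (n + 1) (Fin.snoc w m') ≤ r n w := by
    intro n w m m' hmm
    obtain ⟨p, q, hpq, hΔ, hlen⟩ := hIcc n w
    obtain ⟨p1, q1, hpq1, hΔ1, hlen1⟩ := hIcc (n + 1) (Fin.snoc w m)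
    obtain ⟨p2, q2, hpq2, hΔ2, hlen2⟩ := hIcc (n + 1) (Fin.snoc w m')
    have hs1 : Set.Icc p1 q1 ⊆ Set.Icc p q := by rw [← hΔ1, ← hΔ]; exact hnest n w m
    have hs2 : Set.Icc p2 q2 ⊆ Set.Icc p q := by rw [← hΔ2, ← hΔ]; exact hnest n w m'
    have hd : Disjoint (Set.Icc p1 q1) (Set.Icc p2 q2) := by
      rw [← hΔ1, ← hΔ2]; exact hdisj _ _ _ (hsnoc_ne n w m m' hmm)
    obtain ⟨hp1, hq1⟩ := (Set.Icc_subset_Icc_iff hpq1).1 hs1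
    obtain ⟨hp2, hq2⟩ := (Set.Icc_subset_Icc_iff hpq2).1 hs2
    have hsep : q1 < p2 ∨ q2 < p1 := by
      by_contra hcon
      push_neg at hcon
      obtain ⟨h1, h2⟩ := hcon
      have hmem : max p1 p2 ∈ Set.Icc p1 q1 ∩ Set.Icc p2 q2 := by
        constructor
        · exact ⟨le_max_left _ _, max_le hpq1 h1⟩
        · exact ⟨le_max_right _ _, max_le h2 hpq2⟩
      exact Set.notMem_empty _ (hd.inter_eq ▸ hmem)
    rcases hsep with h | h <;> linarith
  -- the contraction ratio
  set a : ℝ := min (r 1 (fun _ => 0)) (r 1 (fun _ => 1)) with ha_def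
  have ha_pos : 0 < a := lt_min (hrpos 1 _) (hrpos 1 _)
  set ρ : ℝ := 1 - Real.exp (-C) * a with hρ_def
  have hρ_lt1 : ρ < 1 := by
    have := Real.exp_pos (-C)
    have : 0 < Real.exp (-C) * a := mul_pos this ha_pos
    simp only [hρ_def]
    linarith
  have hρ_nonneg : 0 ≤ ρ := by
    have h1 : Real.exp (-C) ≤ 1 := Real.exp_le_one_iff.2 (by linarith)
    have h2 : a ≤ 1 := le_trans (min_le_left _ _) (hr1 1 _)
    have : Real.exp (-C) * a ≤ 1 :=
      mul_le_one₀ h1 ha_pos.le h2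
    simp only [hρ_def]; linarith
  -- exponential decay of the lengths
  have decay1 : ∀ (n : ℕ) (w : Fin (n + 1) → ℕ), r (n + 1) w ≤ ρ ^ n := by
    intro n
    induction n with
    | zero => intro w; simpa using hr1 1 w
    | succ n ih =>
      intro w
      set w' : Fin (n + 1) → ℕ := Fin.init w with hw'
      set m : ℕ := w (Fin.last (n + 1)) with hm
      have hw : w = Fin.snoc w' m := (Fin.snoc_init_self w).symm
      set m' : ℕ := if m = 0 then 1 else 0 with hm'
      have hmm : m ≠ m' := by
        by_cases h : m = 0 <;> simp [hm', h]
      have hsb := hsib (n + 1) w' m m' hmm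
      have happ : (Fin.snoc w' m' : Fin (n + 2) → ℕ) = Fin.append w' (fun _ : Fin 1 => m') := by
        rw [Fin.append_right_eq_snoc]
      have hlow : r (n + 1) w' * r 1 (fun _ : Fin 1 => m') * Real.exp (-C)
          ≤ r (n + 2) (Fin.snoc w' m') := by
        rw [happ]; exact (hAA (n + 1) 1 w' (fun _ => m')).1
      have hra : a ≤ r 1 (fun _ : Fin 1 => m') := by
        by_cases h : m = 0
        · simp only [hm', if_pos h]; exact min_le_right _ _
        · simp only [hm', if_neg h]; exact min_le_left _ _
      have hkey : r (n + 2) (Fin.snoc w' m) ≤ r (n + 1) w' * ρ := by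
        have hwpos := (hrpos (n + 1) w').le
        have hexp := (Real.exp_pos (-C)).le
        have h5 : r (n + 1) w' * a * Real.exp (-C)
            ≤ r (n + 1) w' * r 1 (fun _ : Fin 1 => m') * Real.exp (-C) :=
          mul_le_mul_of_nonneg_right (mul_le_mul_of_nonneg_left hra hwpos) hexp
        have hρeq : r (n + 1) w' * ρ
            = r (n + 1) w' - r (n + 1) w' * a * Real.exp (-C) := by
          rw [hρ_def]; ring
        linarith [hsb, hlow, h5]
      calc r (n + 2) w = r (n + 2) (Fin.snoc w' m) := by rw [← hw]
        _ ≤ r (n + 1) w' * ρ := hkey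
        _ ≤ ρ ^ n * ρ := mul_le_mul_of_nonneg_right (ih w') hρ_nonneg
        _ = ρ ^ (n + 1) := (pow_succ ρ n).symm
  have hρ_pos : 0 < ρ := lt_of_lt_of_le (hrpos 2 (fun _ => 0))
    (by simpa using decay1 1 (fun _ => 0))
  have decay : ∀ (n : ℕ) (w : Fin n → ℕ), r n w ≤ ρ ^ (n - 1) := by
    intro n w
    cases n with
    | zero => simpa using hr1 0 w
    | succ n => simpa using decay1 n w
  -- from a bound on the pressure, an eventual bound on the sums
  have hsum_ev : ∀ s L : ℝ, pressS r s < (L : EReal) →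
      ∀ᶠ n : ℕ in atTop,
        (∑' w : Fin n → ℕ, ENNReal.ofReal (r n w ^ s)) ≤ ENNReal.ofReal (Real.exp (n * L)) := by
    intro s L hL
    have hev : ∀ᶠ n : ℕ in atTop,
        ENNReal.log (∑' w : Fin n → ℕ, ENNReal.ofReal (r n w ^ s)) / ((n : ℝ) : EReal)
          < (L : EReal) := eventually_lt_of_limsup_lt hL
    filter_upwards [hev, eventually_ge_atTop 1] with n hn hn1
    have hnpos : (0 : EReal) < ((n : ℝ) : EReal) := by
      exact_mod_cast (by exact_mod_cast hn1 : (1 : ℝ) ≤ n).trans_lt' one_pos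
    have hntop : ((n : ℝ) : EReal) ≠ ⊤ := EReal.coe_ne_top _
    have hle : ENNReal.log (∑' w : Fin n → ℕ, ENNReal.ofReal (r n w ^ s))
        ≤ ((n : ℝ) : EReal) * (L : EReal) :=
      (EReal.div_le_iff_le_mul hnpos hntop).1 hn.le
    have hle2 : ENNReal.log (∑' w : Fin n → ℕ, ENNReal.ofReal (r n w ^ s))
        ≤ ENNReal.log (ENNReal.ofReal (Real.exp (n * L))) := by
      rw [ENNReal.log_ofReal_of_pos (Real.exp_pos _), Real.log_exp]
      rw [← EReal.coe_mul] at hle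
      exact hle
    exact ENNReal.log_strictMono.le_iff_le.1 hle2
  -- Part 1
  have hpart1 : ∀ s : ℝ, pressS r s < 0 → μH[s] (limitSet Δ) = 0 := by
    intro s hs
    obtain ⟨L, hL1, hL2⟩ := EReal.exists_between_coe_real hs
    have hL2' : L < 0 := by exact_mod_cast hL2
    have hev2 := hsum_ev s L hL1
    -- the covering bound
    have hdiam : ∀ (n : ℕ) (w : Fin n → ℕ),
        Metric.ediam (Δ n w) = ENNReal.ofReal (r n w) := by
      intro n w
      obtain ⟨p, q, hpq, hΔ, hlen⟩ := hIcc n w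
      rw [hΔ, Real.ediam_Icc, hlen]
    have hcover := MeasureTheory.Measure.hausdorffMeasure_le_liminf_tsum (ι := fun n : ℕ => Fin n → ℕ) (l := atTop) s
      (limitSet Δ) (fun n : ℕ => ENNReal.ofReal (ρ ^ (n - 1))) ?_ Δ ?_ ?_
    · refine le_antisymm ?_ zero_le
      refine hcover.trans ?_
      have heq : (fun n : ℕ => ∑' w : Fin n → ℕ, Metric.ediam (Δ n w) ^ s)
          = fun n : ℕ => ∑' w : Fin n → ℕ, ENNReal.ofReal (r n w ^ s) := by
        funext n
        exact tsum_congr fun w => by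
          rw [hdiam n w, ENNReal.ofReal_rpow_of_pos (hrpos n w)]
      rw [heq]
      have htend : Tendsto (fun n : ℕ => ∑' w : Fin n → ℕ, ENNReal.ofReal (r n w ^ s))
          atTop (nhds 0) := by
        have hexp : Tendsto (fun n : ℕ => ENNReal.ofReal (Real.exp (n * L))) atTop (nhds 0) := by
          have h1 : Tendsto (fun n : ℕ => Real.exp (n * L)) atTop (nhds 0) := by
            have : ∀ n : ℕ, Real.exp (n * L) = Real.exp L ^ n := fun n => by
              rw [← Real.exp_nat_mul]
            simp_rw [this]
            exact tendsto_pow_atTop_nhds_zero_of_lt_one (Real.exp_pos L).le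
              (Real.exp_lt_one_iff.2 hL2')
          have := ENNReal.tendsto_ofReal h1
          simpa using this
        refine tendsto_of_tendsto_of_tendsto_of_le_of_le' tendsto_const_nhds hexp
          (Eventually.of_forall fun n => zero_le) hev2
      rw [htend.liminf_eq]
    · -- diameters tend to 0
      have h1 : Tendsto (fun n : ℕ => ρ ^ (n - 1)) atTop (nhds 0) :=
        (tendsto_pow_atTop_nhds_zero_of_lt_one hρ_nonneg hρ_lt1).comp
          (tendsto_sub_atTop_nat 1)
      have := ENNReal.tendsto_ofReal h1
      simpa using this
    · refine Eventually.of_forall fun n => fun w => ?_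
      rw [hdiam n w]
      exact ENNReal.ofReal_le_ofReal (decay n w)
    · exact Eventually.of_forall fun n => Set.iInter_subset _ n
  -- comparison of pressures
  have hB : ∀ t t' : ℝ, 0 ≤ t → t < t' → pressS r t ≤ 0 → pressS r t' < 0 := by
    intro t t' ht0 htt hPt
    set D : ℝ := Real.log ρ with hD_def
    have hDneg : D < 0 := Real.log_neg hρ_pos hρ_lt1
    set ε : ℝ := (t' - t) * (-D) / 4 with hε_def
    have htt' : 0 < t' - t := sub_pos.2 htt
    have hεpos : 0 < ε := by
      apply div_pos (mul_pos htt' (by linarith)) (by norm_num)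
    have hev2 := hsum_ev t ε (lt_of_le_of_lt hPt (by exact_mod_cast hεpos))
    have hfinal : ((t' - t) * D / 2 : ℝ) < 0 := by
      have : (t' - t) * D < 0 := mul_neg_of_pos_of_neg htt' hDneg
      linarith
    refine lt_of_le_of_lt ?_ (show (((t' - t) * D / 2 : ℝ) : EReal) < 0 by exact_mod_cast hfinal)
    refine Filter.limsup_le_of_le (by isBoundedDefault) ?_
    filter_upwards [hev2, eventually_ge_atTop 4] with n hSb hn4
    have hn1 : (1 : ℕ) ≤ n := le_trans (by norm_num) hn4
    -- pointwise comparison of the sums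
    have hterm : ∀ w : Fin n → ℕ,
        ENNReal.ofReal (r n w ^ t') ≤
          ENNReal.ofReal ((ρ ^ (n - 1)) ^ (t' - t)) * ENNReal.ofReal (r n w ^ t) := by
      intro w
      rw [← ENNReal.ofReal_mul (by positivity)]
      apply ENNReal.ofReal_le_ofReal
      have h1 : r n w ^ t' = r n w ^ (t' - t) * r n w ^ t := by
        rw [← Real.rpow_add (hrpos n w)]; ring_nf
      rw [h1]
      apply mul_le_mul_of_nonneg_right _ (Real.rpow_nonneg (hrpos n w).le t)
      exact Real.rpow_le_rpow (hrpos n w).le (decay n w) (by linarith)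
    have hSb' : (∑' w : Fin n → ℕ, ENNReal.ofReal (r n w ^ t'))
        ≤ ENNReal.ofReal ((ρ ^ (n - 1)) ^ (t' - t) * Real.exp (n * ε)) := by
      calc (∑' w : Fin n → ℕ, ENNReal.ofReal (r n w ^ t'))
          ≤ ∑' w : Fin n → ℕ,
              ENNReal.ofReal ((ρ ^ (n - 1)) ^ (t' - t)) * ENNReal.ofReal (r n w ^ t) :=
            ENNReal.tsum_le_tsum hterm
        _ = ENNReal.ofReal ((ρ ^ (n - 1)) ^ (t' - t)) *
              ∑' w : Fin n → ℕ, ENNReal.ofReal (r n w ^ t) := ENNReal.tsum_mul_left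
        _ ≤ ENNReal.ofReal ((ρ ^ (n - 1)) ^ (t' - t)) * ENNReal.ofReal (Real.exp (n * ε)) :=
            mul_le_mul_right hSb _
        _ = ENNReal.ofReal ((ρ ^ (n - 1)) ^ (t' - t) * Real.exp (n * ε)) :=
            (ENNReal.ofReal_mul (by positivity)).symm
    -- rewrite the bound as an exponential
    have hval : (ρ ^ (n - 1)) ^ (t' - t) * Real.exp (n * ε)
        = Real.exp ((n - 1 : ℕ) * D * (t' - t) + n * ε) := by
      rw [Real.rpow_def_of_pos (pow_pos hρ_pos _), Real.log_pow, Real.exp_add]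
    have hlog : ENNReal.log (∑' w : Fin n → ℕ, ENNReal.ofReal (r n w ^ t'))
        ≤ (((n - 1 : ℕ) * D * (t' - t) + n * ε : ℝ) : EReal) := by
      have := ENNReal.log_monotone (hval ▸ hSb')
      rwa [ENNReal.log_ofReal_of_pos (Real.exp_pos _), Real.log_exp] at this
    -- divide by n
    have hnpos : (0 : EReal) < ((n : ℝ) : EReal) := by
      exact_mod_cast (by exact_mod_cast hn1 : (1 : ℝ) ≤ n).trans_lt' one_pos
    refine (EReal.div_le_iff_le_mul hnpos (EReal.coe_ne_top _)).2 ?_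
    refine hlog.trans ?_
    rw [← EReal.coe_mul]
    apply EReal.coe_le_coe_iff.2
    -- the real inequality
    have hcast : ((n - 1 : ℕ) : ℝ) = (n : ℝ) - 1 := by
      rw [Nat.cast_sub hn1]; norm_num
    rw [hcast, hε_def]
    have hn4' : (4 : ℝ) ≤ n := by exact_mod_cast hn4
    nlinarith [mul_pos htt' (neg_pos.2 hDneg)]
  -- Part 2
  refine ⟨hpart1, ?_⟩
  apply le_sInf
  rintro u ⟨t, ht0, rfl, hPt⟩
  apply dimH_le
  intro d' hd'
  by_contra hlt
  push_neg at hlt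
  have htd : t < (d' : ℝ) := by
    rw [← ENNReal.ofReal_coe_nnreal] at hlt
    exact (ENNReal.ofReal_lt_ofReal_iff_of_nonneg ht0).1 hlt
  have h0 := hpart1 (d' : ℝ) (hB t (d' : ℝ) ht0 htd hPt)
  rw [h0] at hd'
  exact (ENNReal.zero_ne_top hd').elim
end
end
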